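/- arXiv:1710.08304 — 5 statements merged into one kernel-verified Lean document; each statement's English description precedes it below -/
import Mathlib

section
/- Let ρ, r₁, …, r_{d-1} be positive reals with ρ ≤ rᵢ ≤ 1 for all i. Define E(r;ρ) = { x ∈ ℝ^d : |xᵢ| < rᵢ for 1 ≤ i ≤ d-1, dist(x + e_d, S^{d-1}) < ρ, x_d > -1 }. Then the Lebesgue measure of E(r;ρ) is comparable to ρ·∏_{i=1}^{d-1} rᵢ; that is, there exist constants c(d), C(d) > 0 depending only on d with c(d)·ρ·∏ rᵢ ≤ |E(r;ρ)| ≤ C(d)·ρ·∏ rᵢ. -/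
/-!
After the translation `y = x + e_d`, `E(r;ρ)` is the part of the shell `|‖y‖ - 1| < ρ` with
`y_d > 0` lying over the box `Q = ∏ (-rᵢ, rᵢ)`, so by Fubini its volume is `∫_Q ℓ(|w|²) dw`, where
`ℓ(s)` is the length of the vertical section of the shell over a point `w` with `|w|² = s`.
For `s ≤ 1/4` this length lies between `4ρ/5` and `5ρ`. That gives the lower bound (integrate over
`Q` shrunk by the factor `2d`) and the upper bound when every `rᵢ ≤ 1/(2d)`. Otherwise some
`r_j > 1/(2d)`; integrating first in `w_j`, each line integral of `ℓ` is at most the area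
`π/2 ((1+ρ)² - (1-ρ)²) = 2πρ` of a planar half-annulus, and the missing factor `r_j` costs at
most `2d`.
-/

open MeasureTheory

/-- The curved box `E(r;ρ)`: a `ρ`-thin neighborhood of a cap of the sphere centered at
`-e_d`, restricted to the box `|xᵢ| < rᵢ` in the first `d-1` coordinates.  Here `d = n+1`. -/
def curvedBoxE (n : ℕ) (r : Fin n → ℝ) (ρ : ℝ) : Set (EuclideanSpace ℝ (Fin (n + 1))) :=
  {x | (∀ i : Fin n, |x i.castSucc| < r i) ∧
    Metric.infDist (x + EuclideanSpace.single (Fin.last n) (1 : ℝ))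
      (Metric.sphere (0 : EuclideanSpace ℝ (Fin (n + 1))) 1) < ρ ∧
    -1 < x (Fin.last n)}

open Metric Set Real
open scoped ENNReal

theorem infDist_sphere_zero {E : Type*} [NormedAddCommGroup E] [NormedSpace ℝ E] [Nontrivial E]
    {R : ℝ} (hR : 0 ≤ R) (y : E) : infDist y (sphere 0 R) = |‖y‖ - R| := by
  have hne : (sphere (0 : E) R).Nonempty := NormedSpace.sphere_nonempty.2 hR
  refine le_antisymm ?_ ((le_infDist hne).2 fun z hz => ?_)
  · obtain ⟨z, hz, hyz⟩ : ∃ z ∈ sphere (0 : E) R, dist y z = |‖y‖ - R| := by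
      rcases eq_or_ne y 0 with rfl | hy
      · obtain ⟨z, hz⟩ := hne
        refine ⟨z, hz, ?_⟩
        rw [mem_sphere_zero_iff_norm] at hz
        simp [hz, abs_of_nonneg hR]
      · have hy' : ‖y‖ ≠ 0 := norm_ne_zero_iff.2 hy
        refine ⟨(R / ‖y‖) • y, ?_, ?_⟩
        · simp [norm_smul, abs_of_nonneg hR, hy']
        · rw [dist_eq_norm, show y - (R / ‖y‖) • y = (1 - R / ‖y‖) • y by module, norm_smul,
            norm_eq_abs, ← abs_norm y, ← abs_mul, abs_norm, sub_mul, one_mul, div_mul_cancel₀ _ hy']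
    exact hyz ▸ infDist_le_dist_of_mem hz
  · rw [mem_sphere_zero_iff_norm] at hz
    simpa [hz, dist_eq_norm] using abs_norm_sub_norm_le y z

theorem integrable_sqrt_sub_sq (A : ℝ) : Integrable fun t : ℝ => √(A - t ^ 2) := by
  refine (by fun_prop : Continuous fun t : ℝ => √(A - t ^ 2)).integrable_of_hasCompactSupport
    (HasCompactSupport.intro (isCompact_Icc (a := -(|A| + 1)) (b := |A| + 1)) fun t ht => ?_)
  have ht : |A| + 1 < |t| := by
    by_contra h
    exact ht (abs_le.1 (not_lt.1 h))
  refine sqrt_eq_zero_of_nonpos ?_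
  nlinarith [abs_nonneg A, le_abs_self A, sq_abs t]

theorem integral_sqrt_sub_sq (A : ℝ) : ∫ t, √(A - t ^ 2) = π / 2 * max A 0 := by
  rcases le_or_gt A 0 with hA | hA
  · have h0 : ∀ t : ℝ, √(A - t ^ 2) = 0 := fun t => sqrt_eq_zero_of_nonpos (by nlinarith)
    simp [h0, max_eq_right hA]
  have hunit : ∫ x, √(1 - x ^ 2) = π / 2 := by
    rw [← intervalIntegral.integral_eq_integral_of_support_subset, integral_sqrt_one_sub_sq]
    intro x hx
    by_contra h
    refine hx (sqrt_eq_zero_of_nonpos ?_)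
    rw [mem_Ioc, not_and_or, not_lt, not_le] at h
    rcases h with h | h <;> nlinarith
  have hscale : ∀ x, √(A - (√A * x) ^ 2) = √A * √(1 - x ^ 2) := fun x => by
    rw [mul_pow, sq_sqrt hA.le, ← sqrt_mul hA.le, mul_one_sub]
  have h := Measure.integral_comp_mul_left (fun t => √(A - t ^ 2)) √A
  simp only [hscale, integral_const_mul, hunit, smul_eq_mul,
    abs_of_pos (inv_pos.2 (sqrt_pos.2 hA))] at h
  rw [eq_inv_mul_iff_mul_eq₀ (sqrt_pos.2 hA).ne'] at h
  rw [max_eq_left hA.le, ← h, ← mul_assoc, mul_self_sqrt hA.le, mul_comm]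

theorem lintegral_sqrt_sub_sq_sub_sqrt_sub_sq_le {A B : ℝ} (hBA : B ≤ A) :
    ∫⁻ t, ENNReal.ofReal (√(A - t ^ 2) - √(B - t ^ 2)) ≤ ENNReal.ofReal (π / 2 * (A - B)) := by
  have hint : Integrable fun t : ℝ => √(A - t ^ 2) - √(B - t ^ 2) :=
    (integrable_sqrt_sub_sq A).sub (integrable_sqrt_sub_sq B)
  rw [← ofReal_integral_eq_lintegral_ofReal hint
      (Filter.Eventually.of_forall fun t => sub_nonneg.2 (sqrt_le_sqrt (by linarith))),
    integral_sub (integrable_sqrt_sub_sq A) (integrable_sqrt_sub_sq B),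
    integral_sqrt_sub_sq, integral_sqrt_sub_sq, ← mul_sub]
  have h : max A 0 - max B 0 ≤ A - B :=
    (le_abs_self _).trans ((abs_max_sub_max_le_abs A B 0).trans_eq (abs_of_nonneg (by linarith)))
  gcongr

/- For `s = |w|²`, the vertical section over `w` of the half-shell `{y | |‖y‖ - 1| < ρ, y_d > 0}` is
the interval `(shellBottom ρ s, shellTop ρ s)`; since `√` vanishes on negative numbers, the
formulas stay valid when this section reaches down to `y_d = 0`. -/
noncomputable def shellBottom (ρ s : ℝ) : ℝ := √(max (1 - ρ) 0 ^ 2 - s)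

noncomputable def shellTop (ρ s : ℝ) : ℝ := √((1 + ρ) ^ 2 - s)

noncomputable def shellWidth (ρ s : ℝ) : ℝ := shellTop ρ s - shellBottom ρ s

theorem mem_Ioo_shellBottom_shellTop {ρ s t : ℝ} (hρ : 0 < ρ) (hs : 0 ≤ s) :
    t ∈ Ioo (shellBottom ρ s) (shellTop ρ s) ↔ 0 < t ∧ |√(t ^ 2 + s) - 1| < ρ := by
  have ha : 0 ≤ max (1 - ρ) 0 := le_max_right _ _
  have ha' : 1 - ρ ≤ max (1 - ρ) 0 := le_max_left _ _
  simp only [mem_Ioo, shellBottom, shellTop, abs_sub_lt_iff]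
  constructor
  · rintro ⟨hlo, hhi⟩
    have ht : 0 < t := (sqrt_nonneg _).trans_lt hlo
    rw [sqrt_lt' ht] at hlo
    rw [lt_sqrt ht.le] at hhi
    have hup : √(t ^ 2 + s) < 1 + ρ := (sqrt_lt' (by linarith)).2 (by linarith)
    have hlow : max (1 - ρ) 0 < √(t ^ 2 + s) := (lt_sqrt ha).2 (by linarith)
    exact ⟨ht, by linarith, by linarith⟩
  · rintro ⟨ht, hup, hlow⟩
    have hlow' : max (1 - ρ) 0 < √(t ^ 2 + s) :=
      max_lt (by linarith) (sqrt_pos.2 (by positivity))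
    have hup' := (sqrt_lt' (by linarith : 0 < 1 + ρ)).1 (by linarith : √(t ^ 2 + s) < 1 + ρ)
    rw [lt_sqrt ha] at hlow'
    exact ⟨(sqrt_lt' ht).2 (by linarith), (lt_sqrt ht.le).2 (by linarith)⟩

theorem shellWidth_mem_Icc {ρ s : ℝ} (hρ : 0 < ρ) (hs : 0 ≤ s) (hs' : s ≤ 1 / 4) :
    shellWidth ρ s ∈ Icc (4 / 5 * ρ) (5 * ρ) := by
  set T := shellTop ρ s
  set B := shellBottom ρ s
  have hT0 : 0 ≤ T := sqrt_nonneg _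
  have hT : T ^ 2 = (1 + ρ) ^ 2 - s := sq_sqrt (by nlinarith)
  have hTle : T ≤ 1 + ρ := by nlinarith
  have hT45 : 4 / 5 ≤ T := by nlinarith
  by_cases hB : max (1 - ρ) 0 ^ 2 - s ≤ 0
  · have hB0 : B = 0 := sqrt_eq_zero_of_nonpos hB
    have hρ2 : 1 / 2 ≤ ρ := by nlinarith [le_max_left (1 - ρ) 0, le_max_right (1 - ρ) 0]
    simp only [shellWidth]
    constructor <;> nlinarith
  · have hρ1 : ρ ≤ 1 := by
      by_contra! h
      rw [max_eq_right (by linarith)] at hB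
      nlinarith
    rw [max_eq_left (by linarith)] at hB
    have hB0 : 0 ≤ B := sqrt_nonneg _
    have hB2 : B ^ 2 = (1 - ρ) ^ 2 - s := by
      simp only [B, shellBottom, max_eq_left (by linarith : 0 ≤ 1 - ρ)]
      exact sq_sqrt (by linarith)
    have hBle : B ≤ 1 - ρ := by nlinarith
    have hprod : (T - B) * (T + B) = 4 * ρ := by linear_combination hT - hB2
    have hTB : B ≤ T := by nlinarith
    simp only [shellWidth]
    constructor <;> nlinarith

theorem lintegral_shellWidth_le {ρ : ℝ} (hρ : 0 ≤ ρ) (hρ1 : ρ ≤ 1) (σ : ℝ) :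
    ∫⁻ t, ENNReal.ofReal (shellWidth ρ (t ^ 2 + σ)) ≤ ENNReal.ofReal (2 * π * ρ) := by
  have hwidth : ∀ t : ℝ, shellWidth ρ (t ^ 2 + σ) =
      √(((1 + ρ) ^ 2 - σ) - t ^ 2) - √(((1 - ρ) ^ 2 - σ) - t ^ 2) := fun t => by
    simp only [shellWidth, shellTop, shellBottom, max_eq_left (sub_nonneg.2 hρ1),
      sub_add_eq_sub_sub_swap]
  simp_rw [hwidth]
  refine (lintegral_sqrt_sub_sq_sub_sqrt_sub_sq_le (by nlinarith)).trans_eq ?_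
  congr 1
  ring

def splitLast (n : ℕ) (x : EuclideanSpace ℝ (Fin (n + 1))) : (Fin n → ℝ) × ℝ :=
  (fun i => x i.castSucc, x (Fin.last n))

theorem measurePreserving_splitLast (n : ℕ) : MeasurePreserving (splitLast n) := by
  have h := (Measure.measurePreserving_swap.comp
    (volume_preserving_piFinSuccAbove (fun _ : Fin (n + 1) => ℝ) (Fin.last n))).comp
    (PiLp.volume_preserving_ofLp (Fin (n + 1)))
  rw [← Measure.volume_eq_prod] at h
  convert h using 1
  ext x <;> simp [splitLast, Fin.init]

theorem curvedBoxE_eq_preimage {n : ℕ} {r : Fin n → ℝ} {ρ : ℝ} (hρ : 0 < ρ) :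
    curvedBoxE n r ρ = (· + EuclideanSpace.single (Fin.last n) 1) ⁻¹' (splitLast n ⁻¹'
      regionBetween (fun w => shellBottom ρ (∑ i, w i ^ 2)) (fun w => shellTop ρ (∑ i, w i ^ 2))
        (univ.pi fun i => Ioo (-r i) (r i))) := by
  ext x
  simp only [curvedBoxE, regionBetween, mem_ofPred_eq, mem_preimage, mem_univ_pi, splitLast]
  set y : EuclideanSpace ℝ (Fin (n + 1)) := x + EuclideanSpace.single (Fin.last n) 1
  have hinit : ∀ i : Fin n, y i.castSucc = x i.castSucc := by simp [y]
  have hlast : y (Fin.last n) = x (Fin.last n) + 1 := by simp [y]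
  have hnorm : ‖y‖ = √(y (Fin.last n) ^ 2 + ∑ i : Fin n, y i.castSucc ^ 2) := by
    simp [EuclideanSpace.norm_eq, Fin.sum_univ_castSucc, add_comm]
  have hpos : -1 < x (Fin.last n) ↔ 0 < x (Fin.last n) + 1 := by
    constructor <;> intro <;> linarith
  simp only [infDist_sphere_zero zero_le_one, hnorm, hinit, hlast, hpos, mem_Ioo, abs_lt,
    mem_Ioo_shellBottom_shellTop hρ (Finset.sum_nonneg fun i _ => sq_nonneg _)]
  tauto

theorem measurable_shellBottom_sum_sq {n : ℕ} (ρ : ℝ) :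
    Measurable fun w : Fin n → ℝ => shellBottom ρ (∑ i, w i ^ 2) := by
  unfold shellBottom; fun_prop

theorem measurable_shellTop_sum_sq {n : ℕ} (ρ : ℝ) :
    Measurable fun w : Fin n → ℝ => shellTop ρ (∑ i, w i ^ 2) := by
  unfold shellTop; fun_prop

theorem measurable_shellWidth_sum_sq {n : ℕ} (ρ : ℝ) :
    Measurable fun w : Fin n → ℝ => ENNReal.ofReal (shellWidth ρ (∑ i, w i ^ 2)) :=
  ENNReal.measurable_ofReal.comp
    ((measurable_shellTop_sum_sq ρ).sub (measurable_shellBottom_sum_sq ρ))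

theorem volume_curvedBoxE {n : ℕ} {r : Fin n → ℝ} {ρ : ℝ} (hρ : 0 < ρ) :
    volume (curvedBoxE n r ρ) =
      ∫⁻ w in univ.pi fun i => Ioo (-r i) (r i), ENNReal.ofReal (shellWidth ρ (∑ i, w i ^ 2)) := by
  rw [curvedBoxE_eq_preimage hρ, measure_preimage_add_right,
    (measurePreserving_splitLast n).measure_preimage
      (measurableSet_regionBetween (measurable_shellBottom_sum_sq ρ) (measurable_shellTop_sum_sq ρ)
        (MeasurableSet.univ_pi fun _ => measurableSet_Ioo)).nullMeasurableSet,
    Measure.volume_eq_prod, volume_regionBetween_eq_lintegral' (measurable_shellBottom_sum_sq ρ)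
      (measurable_shellTop_sum_sq ρ) (MeasurableSet.univ_pi fun _ => measurableSet_Ioo)]
  rfl

theorem volume_pi_Ioo_neg {ι : Type*} [Fintype ι] {r : ι → ℝ} (hr : ∀ i, 0 ≤ r i) :
    volume (univ.pi fun i => Ioo (-r i) (r i)) =
      ENNReal.ofReal (2 ^ Fintype.card ι * ∏ i, r i) := by
  rw [Real.volume_pi_Ioo, ← ENNReal.ofReal_prod_of_nonneg fun i _ => by linarith [hr i]]
  simp_rw [sub_neg_eq_add, ← two_mul, Finset.prod_mul_distrib, Finset.prod_const, Finset.card_univ]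

theorem sum_sq_le_quarter {n : ℕ} {w : Fin n → ℝ} (hw : ∀ i, |w i| ≤ 1 / (2 * (n + 1))) :
    ∑ i, w i ^ 2 ≤ 1 / 4 := by
  calc ∑ i, w i ^ 2 ≤ ∑ _i : Fin n, (1 / (2 * (n + 1) : ℝ)) ^ 2 :=
        Finset.sum_le_sum fun i _ => sq_le_sq' (abs_le.1 (hw i)).1 (abs_le.1 (hw i)).2
    _ = n / (4 * (n + 1) ^ 2) := by
        rw [Finset.sum_const, Finset.card_univ, Fintype.card_fin, nsmul_eq_mul]
        field_simp
        ring
    _ ≤ 1 / 4 := by rw [div_le_div_iff₀ (by positivity) (by norm_num)]; nlinarith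

theorem setLIntegral_pi_le_of_lintegral_insertNth_le {m : ℕ} {s : Fin (m + 1) → Set ℝ}
    {f : (Fin (m + 1) → ℝ) → ℝ≥0∞} (hf : Measurable f) (j : Fin (m + 1)) {C : ℝ≥0∞}
    (hC : ∀ v, ∫⁻ t, f (j.insertNth t v) ≤ C) :
    ∫⁻ w in univ.pi s, f w ≤ C * volume (univ.pi fun k => s (j.succAbove k)) := by
  have hmp := volume_preserving_piFinSuccAbove (fun _ : Fin (m + 1) => ℝ) j
  set e := MeasurableEquiv.piFinSuccAbove (fun _ : Fin (m + 1) => ℝ) j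
  set S := univ.pi fun k => s (j.succAbove k)
  have hsub : univ.pi s ⊆ e ⁻¹' (univ ×ˢ S) := fun w hw =>
    ⟨mem_univ _, fun k _ => hw (j.succAbove k) (mem_univ _)⟩
  calc ∫⁻ w in univ.pi s, f w
      ≤ ∫⁻ w in e ⁻¹' (univ ×ˢ S), f w := lintegral_mono_set hsub
    _ = ∫⁻ p in univ ×ˢ S, f (e.symm p) := by
        simpa only [e.symm_apply_apply] using
          hmp.setLIntegral_comp_preimage_emb e.measurableEmbedding (fun p => f (e.symm p)) _
    _ = ∫⁻ v in S, ∫⁻ t, f (j.insertNth t v) := by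
        rw [Measure.volume_eq_prod, ← Measure.prod_restrict, Measure.restrict_univ,
          lintegral_prod_symm (fun p => f (e.symm p)) (hf.comp e.symm.measurable).aemeasurable]
        simp [e, MeasurableEquiv.piFinSuccAbove_symm_apply, Fin.insertNthEquiv]
    _ ≤ ∫⁻ v in S, C := lintegral_mono fun v => hC v
    _ = C * volume S := setLIntegral_const S C

theorem ofReal_le_volume_curvedBoxE {n : ℕ} {r : Fin n → ℝ} {ρ : ℝ} (hρ : 0 < ρ)
    (hr0 : ∀ i, 0 ≤ r i) (hr1 : ∀ i, r i ≤ 1) :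
    ENNReal.ofReal (4 / 5 / ((n : ℝ) + 1) ^ n * (ρ * ∏ i, r i)) ≤ volume (curvedBoxE n r ρ) := by
  set t : Fin n → ℝ := fun i => r i / (2 * (n + 1))
  have ht0 : ∀ i, 0 ≤ t i := fun i => div_nonneg (hr0 i) (by positivity)
  have htr : ∀ i, t i ≤ r i := fun i => div_le_self (hr0 i) (by linarith [n.cast_nonneg (α := ℝ)])
  have hsmall : ∀ w ∈ univ.pi fun i => Ioo (-t i) (t i), ∑ i, w i ^ 2 ≤ 1 / 4 := fun w hw =>
    sum_sq_le_quarter fun i => (abs_lt.2 (hw i (mem_univ i))).le.trans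
      (div_le_div_of_nonneg_right (hr1 i) (by positivity))
  rw [volume_curvedBoxE hρ]
  calc ENNReal.ofReal (4 / 5 / ((n : ℝ) + 1) ^ n * (ρ * ∏ i, r i))
      = ∫⁻ _ in univ.pi fun i => Ioo (-t i) (t i), ENNReal.ofReal (4 / 5 * ρ) := by
        rw [setLIntegral_const, volume_pi_Ioo_neg ht0, ← ENNReal.ofReal_mul (by positivity)]
        congr 1
        simp only [t, Finset.prod_div_distrib, Finset.prod_const, Finset.card_univ,
          Fintype.card_fin, mul_pow]
        field_simp
    _ ≤ ∫⁻ w in univ.pi fun i => Ioo (-t i) (t i), ENNReal.ofReal (shellWidth ρ (∑ i, w i ^ 2)) :=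
        setLIntegral_mono (measurable_shellWidth_sum_sq ρ) fun w hw => ENNReal.ofReal_le_ofReal
          (shellWidth_mem_Icc hρ (by positivity) (hsmall w hw)).1
    _ ≤ _ := lintegral_mono_set (pi_mono fun i _ => Ioo_subset_Ioo (neg_le_neg (htr i)) (htr i))

theorem volume_curvedBoxE_le_of_forall_le {n : ℕ} {r : Fin n → ℝ} {ρ : ℝ} (hρ : 0 < ρ)
    (hr0 : ∀ i, 0 ≤ r i) (hr : ∀ i, r i ≤ 1 / (2 * (n + 1))) :
    volume (curvedBoxE n r ρ) ≤ ENNReal.ofReal (5 * 2 ^ n * (ρ * ∏ i, r i)) := by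
  have hsmall : ∀ w ∈ univ.pi fun i => Ioo (-r i) (r i), ∑ i, w i ^ 2 ≤ 1 / 4 := fun w hw =>
    sum_sq_le_quarter fun i => (abs_lt.2 (hw i (mem_univ i))).le.trans (hr i)
  calc volume (curvedBoxE n r ρ)
      ≤ ∫⁻ _ in univ.pi fun i => Ioo (-r i) (r i), ENNReal.ofReal (5 * ρ) := by
        rw [volume_curvedBoxE hρ]
        exact setLIntegral_mono measurable_const fun w hw => ENNReal.ofReal_le_ofReal
          (shellWidth_mem_Icc hρ (by positivity) (hsmall w hw)).2
    _ = ENNReal.ofReal (5 * 2 ^ n * (ρ * ∏ i, r i)) := by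
        rw [setLIntegral_const, volume_pi_Ioo_neg hr0, ← ENNReal.ofReal_mul (by positivity),
          Fintype.card_fin]
        ring_nf

theorem volume_curvedBoxE_le_of_lt {n : ℕ} {r : Fin n → ℝ} {ρ : ℝ} (hρ : 0 < ρ) (hρ1 : ρ ≤ 1)
    (hr0 : ∀ i, 0 ≤ r i) (j : Fin n) (hj : 1 / (2 * (n + 1)) < r j) :
    volume (curvedBoxE n r ρ) ≤ ENNReal.ofReal (8 * (n + 1) * 2 ^ n * (ρ * ∏ i, r i)) := by
  obtain ⟨m, rfl⟩ := Nat.exists_eq_add_one.2 j.pos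
  have hsum (t : ℝ) (v : Fin m → ℝ) : ∑ i, j.insertNth t v i ^ 2 = t ^ 2 + ∑ k, v k ^ 2 := by
    simp [Fin.sum_univ_succAbove _ j]
  rw [volume_curvedBoxE hρ]
  refine (setLIntegral_pi_le_of_lintegral_insertNth_le (measurable_shellWidth_sum_sq ρ) j
    (C := ENNReal.ofReal (2 * π * ρ)) fun v => ?_).trans ?_
  · simp_rw [hsum]
    exact lintegral_shellWidth_le hρ.le hρ1 _
  rw [volume_pi_Ioo_neg fun k => hr0 _, ← ENNReal.ofReal_mul (by positivity)]
  refine ENNReal.ofReal_le_ofReal ?_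
  set P := ∏ k, r (j.succAbove k)
  have hX : 0 ≤ ρ * 2 ^ m * P :=
    mul_nonneg (by positivity) (Finset.prod_nonneg fun k _ => hr0 (j.succAbove k))
  rw [div_lt_iff₀ (by positivity)] at hj
  calc 2 * π * ρ * (2 ^ Fintype.card (Fin m) * P)
      = 2 * π * (ρ * 2 ^ m * P) := by rw [Fintype.card_fin]; ring
    _ ≤ 8 * (ρ * 2 ^ m * P) := by gcongr; linarith [pi_le_four]
    _ ≤ 8 * (ρ * 2 ^ m * P) * (r j * (2 * ((m + 1 : ℕ) + 1))) :=
        le_mul_of_one_le_right (by positivity) hj.le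
    _ = 8 * ((m + 1 : ℕ) + 1) * 2 ^ (m + 1) * (ρ * ∏ i, r i) := by
        rw [Fin.prod_univ_succAbove r j]; ring

/-- `|E(r;ρ)| ∼ ρ·∏ rᵢ`, with constants depending only on the dimension. -/
theorem stmt_2 (n : ℕ) :
    ∃ c C : ℝ, 0 < c ∧ 0 < C ∧
      ∀ (ρ : ℝ) (r : Fin n → ℝ), 0 < ρ → (∀ i, ρ ≤ r i ∧ r i ≤ 1) →
        ENNReal.ofReal (c * (ρ * ∏ i, r i)) ≤ volume (curvedBoxE n r ρ) ∧
        volume (curvedBoxE n r ρ) ≤ ENNReal.ofReal (C * (ρ * ∏ i, r i)) := by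
  refine ⟨4 / 5 / ((n : ℝ) + 1) ^ n, 8 * (n + 1) * 2 ^ n, by positivity, by positivity,
    fun ρ r hρ hr => ?_⟩
  have hr0 : ∀ i, 0 ≤ r i := fun i => hρ.le.trans (hr i).1
  refine ⟨ofReal_le_volume_curvedBoxE hρ hr0 fun i => (hr i).2, ?_⟩
  by_cases hsmall : ∀ i, r i ≤ 1 / (2 * (n + 1))
  · refine (volume_curvedBoxE_le_of_forall_le hρ hr0 hsmall).trans (ENNReal.ofReal_le_ofReal ?_)
    have hX : 0 ≤ ρ * ∏ i, r i := mul_nonneg hρ.le (Finset.prod_nonneg fun i _ => hr0 i)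
    gcongr
    nlinarith [n.cast_nonneg (α := ℝ)]
  · obtain ⟨j, hj⟩ := not_forall.1 hsmall
    exact volume_curvedBoxE_le_of_lt hρ ((hr j).1.trans (hr j).2) hr0 j (not_le.1 hj)
end

section
/- For every η > 0 and every dimension n ≥ 1 there is a constant c(η,n) > 0 with the following property: for every Lebesgue measurable set A ⊂ ℝ^n with 0 < |A| < ∞, there exists a bounded balanced convex set V ⊂ ℝ^n such that for every balanced convex subset V' ⊂ V with |V'| ≤ |V|/2, one has |A ∩ (V \ V')| ≥ c(η,n) (|A|/|V|)^η |A|. In particular |V| ≳ |A|. -/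
open MeasureTheory Metric Bornology

set_option maxHeartbeats 1000000

/-- Christ's convex-approximation stopping-time lemma: for every `η > 0` there is
`c(η,n) > 0` so that every measurable set `A ⊂ ℝⁿ` of finite positive measure admits a
bounded balanced convex set `V` with `|V| ≳ |A|` such that for every balanced convex
`V' ⊆ V` with `|V'| ≤ |V|/2`, `|A ∩ (V \ V')| ≥ c (|A|/|V|)^η |A|`. -/
theorem stmt_9 (n : ℕ) (hn : 1 ≤ n) (η : ℝ) (hη : 0 < η) :
    ∃ c : ℝ, 0 < c ∧
      ∀ A : Set (EuclideanSpace ℝ (Fin n)), MeasurableSet A →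
        0 < volume A → volume A < ⊤ →
        ∃ V : Set (EuclideanSpace ℝ (Fin n)),
          Bornology.IsBounded V ∧ Convex ℝ V ∧ -V = V ∧
          c * (volume A).toReal ≤ (volume V).toReal ∧
          ∀ V' : Set (EuclideanSpace ℝ (Fin n)), V' ⊆ V → Convex ℝ V' → -V' = V' →
            volume V' ≤ volume V / 2 →
            c * ((volume A).toReal / (volume V).toReal) ^ η * (volume A).toReal ≤
              (volume (A ∩ (V \ V'))).toReal := by
  classical
  have h2η : (1:ℝ) < 2 ^ η := by
    rw [Real.one_lt_rpow_iff_of_pos (by norm_num)]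
    exact Or.inl ⟨by norm_num, hη⟩
  have h8pos : (0:ℝ) < (8:ℝ) ^ η := Real.rpow_pos_of_pos (by norm_num) _
  have h4pos : (0:ℝ) < (4:ℝ) ^ η := Real.rpow_pos_of_pos (by norm_num) _
  have hK0 : (0:ℝ) < (2:ℝ) ^ η - 1 := by linarith
  set c : ℝ := min (1/4) (((2:ℝ) ^ η - 1) / (4 * (8:ℝ) ^ η)) with hcdef
  have hcpos : 0 < c := lt_min (by norm_num) (by positivity)
  have hc4 : c ≤ 1/4 := min_le_left _ _
  refine ⟨c, hcpos, ?_⟩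
  intro A hA hA0 hAtop
  set a := (volume A).toReal with hadef
  have hapos : 0 < a := ENNReal.toReal_pos (ne_of_gt hA0) hAtop.ne
  set K : ℝ := c / ((2:ℝ) ^ η - 1) with hKdef
  have hKpos : 0 < K := by positivity
  have hcK : c = K * ((2:ℝ) ^ η - 1) := by
    rw [hKdef]; field_simp
  have hK2 : K * (2:ℝ) ^ η = K + c := by rw [hcK]; ring
  have h84 : (8:ℝ) ^ η = 2 ^ η * 4 ^ η := by
    rw [show (8:ℝ) = 2 * 4 by norm_num, Real.mul_rpow (by norm_num) (by norm_num)]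
  -- key constant inequality
  have hKc4 : (K + c) * (4:ℝ) ^ η ≤ 1/4 := by
    have hc2 : c ≤ ((2:ℝ) ^ η - 1) / (4 * (8:ℝ) ^ η) := min_le_right _ _
    have hKc : K + c = c * 2 ^ η / ((2:ℝ) ^ η - 1) := by
      rw [hKdef]; field_simp; ring
    rw [hKc, div_mul_eq_mul_div, div_le_iff₀ hK0]
    calc c * 2 ^ η * (4:ℝ) ^ η
        ≤ (((2:ℝ) ^ η - 1) / (4 * (8:ℝ) ^ η)) * 2 ^ η * 4 ^ η := by
          apply mul_le_mul_of_nonneg_right _ h4pos.le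
          exact mul_le_mul_of_nonneg_right hc2 (by positivity)
      _ = 1/4 * ((2:ℝ) ^ η - 1) := by
          rw [h84]; field_simp
  -- The stopping step
  have step : ∀ V : Set (EuclideanSpace ℝ (Fin n)),
      IsBounded V → Convex ℝ V → -V = V →
      a / 4 ≤ (volume V).toReal →
      a / 2 ≤ (volume (A ∩ V)).toReal + K * (a / (volume V).toReal) ^ η * a →
      (∀ V' : Set (EuclideanSpace ℝ (Fin n)), V' ⊆ V → Convex ℝ V' → -V' = V' →
          volume V' ≤ volume V / 2 →
          c * (a / (volume V).toReal) ^ η * a ≤ (volume (A ∩ (V \ V'))).toReal) ∨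
      (∃ V' : Set (EuclideanSpace ℝ (Fin n)), IsBounded V' ∧ Convex ℝ V' ∧ -V' = V' ∧
          (volume V').toReal ≤ (volume V).toReal / 2 ∧
          a / 4 ≤ (volume V').toReal ∧
          a / 2 ≤ (volume (A ∩ V')).toReal + K * (a / (volume V').toReal) ^ η * a) := by
    intro V hVb hVc hVs hVge hVinv
    by_cases hbad : ∃ V' : Set (EuclideanSpace ℝ (Fin n)), V' ⊆ V ∧ Convex ℝ V' ∧ -V' = V' ∧
        volume V' ≤ volume V / 2 ∧
        (volume (A ∩ (V \ V'))).toReal < c * (a / (volume V).toReal) ^ η * a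
    · right
      obtain ⟨V', hsub, hV'c, hV's, hhalf, hloss⟩ := hbad
      have hVfin : volume V ≠ ⊤ := hVb.measure_lt_top.ne
      have hV'b : IsBounded V' := hVb.subset hsub
      have hV'fin : volume V' ≠ ⊤ := hV'b.measure_lt_top.ne
      set vV := (volume V).toReal with hvV
      set vV' := (volume V').toReal with hvV'
      have hvVpos : 0 < vV := lt_of_lt_of_le (by positivity) hVge
      have hhalfR : vV' ≤ vV / 2 := by
        have h2t : (volume V / 2) ≠ ⊤ := by
          simp [ENNReal.div_eq_top, hVfin]
        have := ENNReal.toReal_mono h2t hhalf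
        rwa [ENNReal.toReal_div, ENNReal.toReal_ofNat] at this
      -- subadditivity of mass
      have hfin1 : volume (A ∩ (V \ V')) ≠ ⊤ :=
        ((measure_mono (Set.inter_subset_right.trans Set.diff_subset)).trans_lt
          hVb.measure_lt_top).ne
      have hfin2 : volume (A ∩ V') ≠ ⊤ :=
        ((measure_mono Set.inter_subset_right).trans_lt hV'b.measure_lt_top).ne
      have hfin0 : volume (A ∩ V) ≠ ⊤ :=
        ((measure_mono Set.inter_subset_right).trans_lt hVb.measure_lt_top).ne
      have hsubadd : volume (A ∩ V) ≤ volume (A ∩ (V \ V')) + volume (A ∩ V') := by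
        refine le_trans (measure_mono ?_) (measure_union_le _ _)
        intro x hx
        by_cases hx' : x ∈ V'
        · exact Or.inr ⟨hx.1, hx'⟩
        · exact Or.inl ⟨hx.1, hx.2, hx'⟩
      have hm : (volume (A ∩ V)).toReal ≤
          (volume (A ∩ (V \ V'))).toReal + (volume (A ∩ V')).toReal := by
        rw [← ENNReal.toReal_add hfin1 hfin2]
        exact ENNReal.toReal_mono (by exact ENNReal.add_ne_top.2 ⟨hfin1, hfin2⟩) hsubadd
      set m := (volume (A ∩ V)).toReal
      set l := (volume (A ∩ (V \ V'))).toReal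
      set m' := (volume (A ∩ V')).toReal
      set r := a / vV with hrdef
      have hrpos : 0 < r := by positivity
      have hr4 : r ≤ 4 := by
        rw [hrdef, div_le_iff₀ hvVpos]; linarith
      have hr4p : r ^ η ≤ (4:ℝ) ^ η := Real.rpow_le_rpow hrpos.le hr4 hη.le
      have hrppos : 0 < r ^ η := Real.rpow_pos_of_pos hrpos _
      have hexp : (K + c) * r ^ η * a = K * r ^ η * a + c * r ^ η * a := by ring
      have h12 : (K + c) * r ^ η * a ≤ (1/4) * a := by
        have h1 : (K + c) * r ^ η ≤ (K + c) * (4:ℝ) ^ η :=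
          mul_le_mul_of_nonneg_left hr4p (by positivity)
        have h2 : (K + c) * r ^ η * a ≤ ((K + c) * (4:ℝ) ^ η) * a :=
          mul_le_mul_of_nonneg_right h1 hapos.le
        have h3 : ((K + c) * (4:ℝ) ^ η) * a ≤ (1/4) * a :=
          mul_le_mul_of_nonneg_right hKc4 hapos.le
        linarith
      have hm'low : a / 4 ≤ m' := by linarith
      have hm'V : m' ≤ vV' :=
        ENNReal.toReal_mono hV'fin (measure_mono Set.inter_subset_right)
      have hge' : a / 4 ≤ vV' := le_trans hm'low hm'V
      have hvV'pos : 0 < vV' := lt_of_lt_of_le (by positivity) hge'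
      set r' := a / vV' with hr'def
      have h2r : 2 * r ≤ r' := by
        rw [hr'def, hrdef, mul_div_assoc', div_le_div_iff₀ hvVpos hvV'pos]
        nlinarith
      have hrr : (2:ℝ) ^ η * r ^ η ≤ r' ^ η := by
        rw [← Real.mul_rpow (by norm_num) hrpos.le]
        exact Real.rpow_le_rpow (by positivity) h2r hη.le
      have t3 : K * ((2:ℝ) ^ η * r ^ η) = (K + c) * r ^ η := by
        rw [← hK2]; ring
      have t2 : (K + c) * r ^ η * a ≤ K * r' ^ η * a := by
        have t1 : K * ((2:ℝ) ^ η * r ^ η) ≤ K * r' ^ η :=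
          mul_le_mul_of_nonneg_left hrr hKpos.le
        rw [← t3]
        exact mul_le_mul_of_nonneg_right t1 hapos.le
      refine ⟨V', hV'b, hV'c, hV's, hhalfR, hge', ?_⟩
      -- a/2 ≤ m' + K * r'^η * a
      linarith
    · left
      intro V' h1 h2 h3 h4
      by_contra hlt
      exact hbad ⟨V', h1, h2, h3, h4, not_le.mp hlt⟩
  -- main induction on number of available halvings
  have key : ∀ N : ℕ, ∀ V : Set (EuclideanSpace ℝ (Fin n)),
      IsBounded V → Convex ℝ V → -V = V →
      (volume V).toReal ≤ 2 ^ N * (a / 4) → a / 4 ≤ (volume V).toReal →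
      a / 2 ≤ (volume (A ∩ V)).toReal + K * (a / (volume V).toReal) ^ η * a →
      ∃ W : Set (EuclideanSpace ℝ (Fin n)),
        IsBounded W ∧ Convex ℝ W ∧ -W = W ∧
        c * a ≤ (volume W).toReal ∧
        ∀ V' : Set (EuclideanSpace ℝ (Fin n)), V' ⊆ W → Convex ℝ V' → -V' = V' →
          volume V' ≤ volume W / 2 →
          c * (a / (volume W).toReal) ^ η * a ≤ (volume (A ∩ (W \ V'))).toReal := by
    intro N
    induction N with
    | zero =>
      intro V hVb hVc hVs hVle hVge hVinv
      rcases step V hVb hVc hVs hVge hVinv with hgood | ⟨V', _, _, _, hhalf, hge', _⟩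
      · refine ⟨V, hVb, hVc, hVs, ?_, hgood⟩
        have : c * a ≤ (1/4) * a := mul_le_mul_of_nonneg_right hc4 hapos.le
        linarith
      · exfalso
        rw [pow_zero, one_mul] at hVle
        linarith
    | succ N ih =>
      intro V hVb hVc hVs hVle hVge hVinv
      rcases step V hVb hVc hVs hVge hVinv with hgood | ⟨V', hb', hc', hs', hhalf, hge', hinv'⟩
      · refine ⟨V, hVb, hVc, hVs, ?_, hgood⟩
        have : c * a ≤ (1/4) * a := mul_le_mul_of_nonneg_right hc4 hapos.le
        linarith
      · refine ih V' hb' hc' hs' ?_ hge' hinv'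
        rw [pow_succ] at hVle
        linarith
  -- choose the starting ball
  have hcover : A = ⋃ k : ℕ, A ∩ closedBall (0 : EuclideanSpace ℝ (Fin n)) k := by
    ext x
    simp only [Set.mem_iUnion, Set.mem_inter_iff, mem_closedBall, dist_zero_right]
    constructor
    · intro hx
      obtain ⟨k, hk⟩ := exists_nat_ge ‖x‖
      exact ⟨k, hx, hk⟩
    · rintro ⟨k, hk, _⟩; exact hk
  have hdir : Directed (· ⊆ ·) (fun k : ℕ => A ∩ closedBall (0 : EuclideanSpace ℝ (Fin n)) k) := by
    apply Monotone.directed_le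
    intro i j hij
    exact Set.inter_subset_inter_right _ (closedBall_subset_closedBall (by exact_mod_cast hij))
  have hsup : volume A = ⨆ k : ℕ, volume (A ∩ closedBall (0 : EuclideanSpace ℝ (Fin n)) k) := by
    conv_lhs => rw [hcover]
    exact hdir.measure_iUnion
  obtain ⟨k, hk⟩ : ∃ k : ℕ, volume A / 2 <
      volume (A ∩ closedBall (0 : EuclideanSpace ℝ (Fin n)) k) := by
    have hhalf : volume A / 2 < ⨆ k : ℕ, volume (A ∩ closedBall (0 : EuclideanSpace ℝ (Fin n)) k) :=
      lt_of_lt_of_le (ENNReal.half_lt_self (ne_of_gt hA0) hAtop.ne) (le_of_eq hsup)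
    exact lt_iSup_iff.mp hhalf
  set c1 := (volume (ball (0 : EuclideanSpace ℝ (Fin n)) 1)).toReal with hc1def
  have hc1pos : 0 < c1 := by
    apply ENNReal.toReal_pos
    · exact (measure_ball_pos volume _ one_pos).ne'
    · exact (isBounded_ball.measure_lt_top).ne
  have hballvol : ∀ R : ℝ, 0 ≤ R →
      (volume (closedBall (0 : EuclideanSpace ℝ (Fin n)) R)).toReal = R ^ n * c1 := by
    intro R hR
    rw [Measure.addHaar_closedBall _ _ hR, ENNReal.toReal_mul,
      ENNReal.toReal_ofReal (by positivity), finrank_euclideanSpace_fin]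
  set R : ℝ := max (k : ℝ) (max 1 (a / (4 * c1))) with hRdef
  have hR1 : (1:ℝ) ≤ R := le_trans (le_max_left _ _) (le_max_right _ _)
  have hR0 : (0:ℝ) ≤ R := by linarith
  have hRk : (k : ℝ) ≤ R := le_max_left _ _
  have hRa : a / (4 * c1) ≤ R := le_trans (le_max_right _ _) (le_max_right _ _)
  set V0 := closedBall (0 : EuclideanSpace ℝ (Fin n)) R with hV0def
  have hV0b : IsBounded V0 := isBounded_closedBall
  have hV0c : Convex ℝ V0 := convex_closedBall _ _
  have hV0s : -V0 = V0 := by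
    ext x
    simp [hV0def, Set.mem_neg, mem_closedBall, dist_zero_right]
  have hvB : (volume V0).toReal = R ^ n * c1 := hballvol R hR0
  have hV0ge : a / 4 ≤ (volume V0).toReal := by
    rw [hvB]
    have h1 : R ≤ R ^ n := le_self_pow₀ hR1 (by omega)
    have h2 : (a / (4 * c1)) * c1 ≤ R * c1 := mul_le_mul_of_nonneg_right hRa hc1pos.le
    have h3 : R * c1 ≤ R ^ n * c1 := mul_le_mul_of_nonneg_right h1 hc1pos.le
    have h4 : (a / (4 * c1)) * c1 = a / 4 := by
      rw [div_mul_eq_mul_div, mul_div_mul_right _ _ hc1pos.ne']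
    linarith
  have hmass : a / 2 ≤ (volume (A ∩ V0)).toReal := by
    have hmono : volume (A ∩ closedBall (0 : EuclideanSpace ℝ (Fin n)) k) ≤ volume (A ∩ V0) :=
      measure_mono (Set.inter_subset_inter_right _ (closedBall_subset_closedBall hRk))
    have hlt : volume A / 2 ≤ volume (A ∩ V0) := le_trans hk.le hmono
    have hfin : volume (A ∩ V0) ≠ ⊤ :=
      ((measure_mono Set.inter_subset_right).trans_lt hV0b.measure_lt_top).ne
    have := ENNReal.toReal_mono hfin hlt
    rwa [ENNReal.toReal_div, ENNReal.toReal_ofNat] at this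
  have hV0inv : a / 2 ≤ (volume (A ∩ V0)).toReal +
      K * (a / (volume V0).toReal) ^ η * a := by
    have : 0 ≤ K * (a / (volume V0).toReal) ^ η * a := by
      have : (0:ℝ) ≤ (a / (volume V0).toReal) ^ η :=
        Real.rpow_nonneg (by positivity) _
      positivity
    linarith
  obtain ⟨N, hN⟩ : ∃ N : ℕ, (volume V0).toReal ≤ 2 ^ N * (a / 4) := by
    obtain ⟨N, hN⟩ := pow_unbounded_of_one_lt ((volume V0).toReal / (a / 4)) (by norm_num : (1:ℝ) < 2)
    exact ⟨N, by rw [div_lt_iff₀ (by positivity)] at hN; linarith⟩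
  obtain ⟨W, hWb, hWc, hWs, hWge, hWgood⟩ := key N V0 hV0b hV0c hV0s hN hV0ge hV0inv
  exact ⟨W, hWb, hWc, hWs, hWge, hWgood⟩
end

section
/- Fix a₀ ∈ ℝ^{d-1} and a nonzero vector u ∈ ℝ^{d-1} with |a₀|, |u| sufficiently small, and define s(r) = (r e₁ + a₀)/√(1 + |r e₁ + a₀|²) for r ∈ ℝ with |r| small, where e₁ is the first standard basis vector. Let g(v) = √(1-|v|²) and f_u(r) = g(u + s(r)) − g(s(r)). Then the equation f_u'(r) = 0 is equivalent to the vanishing of a polynomial p_{u,a₀}(r) in r of degree bounded by a constant depending only on d, and this polynomial is identically zero only if u = 0. Consequently, for u ≠ 0, the function r ↦ f_u(r) is at most O(1)-to-one on |r| ≪ 1. -/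
noncomputable section

/-- `s(r) = (r e₁ + a₀)/√(1 + |r e₁ + a₀|²)`. -/
def sCurve (m : ℕ) (a₀ : EuclideanSpace ℝ (Fin (m + 1))) (r : ℝ) :
    EuclideanSpace ℝ (Fin (m + 1)) :=
  (Real.sqrt (1 + ‖r • EuclideanSpace.single (0 : Fin (m + 1)) (1 : ℝ) + a₀‖ ^ 2))⁻¹ •
    (r • EuclideanSpace.single (0 : Fin (m + 1)) (1 : ℝ) + a₀)

/-- `f_u(r) = g(u + s(r)) − g(s(r))` with `g(v) = √(1-|v|²)`. -/
def fFiber (m : ℕ) (a₀ u : EuclideanSpace ℝ (Fin (m + 1))) (r : ℝ) : ℝ :=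
  Real.sqrt (1 - ‖u + sCurve m a₀ r‖ ^ 2) - Real.sqrt (1 - ‖sCurve m a₀ r‖ ^ 2)

open Set Polynomial RealInnerProductSpace

/-!
Write `q(r) = 1 + ‖r e₁ + a₀‖²` and `ℓ(r) = ⟪u, r e₁ + a₀⟫`, both polynomials in `r`. Then
`g(s(r)) = q^{-1/2}` and `g(u + s(r)) = √(q⁻¹ - ‖u‖² - 2 ℓ q^{-1/2})`, so `f_u'(r) = 0` is an
algebraic equation in `r`, `√q` and the outer square root. Squaring twice removes both radicals
and leaves a polynomial `critPoly` of degree at most `8`, which for `u ≠ 0` does not vanish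
identically (evaluate it at the vertex of `q`, where `q' = 0`, and one unit to the right of it).
So `f_u` has at most `8` critical points on `|r| < 1/3`, and by Rolle's theorem each of its
fibers there has at most `9` points. The polynomial of the statement is `∏ (X - r₀)` over these
critical points `r₀`.
-/

theorem encard_setOf_eq_le_encard_setOf_deriv_eq_zero_add_one {f : ℝ → ℝ} {s : Set ℝ}
    (hs : s.OrdConnected) (hf : ContinuousOn f s) (y : ℝ) :
    {x ∈ s | f x = y}.encard ≤ {x ∈ s | deriv f x = 0}.encard + 1 := by
  obtain hZ | hZ := {x ∈ s | deriv f x = 0}.finite_or_infinite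
  swap
  · simp [hZ.encard_eq]
  have card_le (T : Finset ℝ) (hT : ↑T ⊆ {x ∈ s | f x = y}) :
      T.card ≤ hZ.toFinset.card + 1 := by
    refine Finset.card_le_of_interleaved fun a ha b hb hab _ => ?_
    have hIcc : Icc a b ⊆ s := hs.out (hT ha).1 (hT hb).1
    obtain ⟨z, hz, hz0⟩ :=
      exists_deriv_eq_zero hab (hf.mono hIcc) ((hT ha).2.trans (hT hb).2.symm)
    exact ⟨z, hZ.mem_toFinset.2 ⟨hIcc (Ioo_subset_Icc_self hz), hz0⟩, hz⟩
  have hfin : {x ∈ s | f x = y}.Finite := by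
    by_contra hinf
    obtain ⟨T, hT, hcard⟩ := Set.Infinite.exists_subset_card_eq hinf (hZ.toFinset.card + 2)
    have := card_le T hT
    omega
  rw [← hfin.coe_toFinset, ← hZ.coe_toFinset, encard_coe_eq_coe_finsetCard,
    encard_coe_eq_coe_finsetCard]
  exact_mod_cast card_le _ hfin.coe_toFinset.subset

theorem Polynomial.exists_ne_zero_isRoot_iff_mem {R : Type*} [CommRing R] [IsDomain R]
    {P : R[X]} (hP : P ≠ 0) {Z : Set R} (hZ : Z ⊆ {x | P.IsRoot x}) :
    ∃ p : R[X], p ≠ 0 ∧ Z.encard = p.natDegree ∧ p.natDegree ≤ P.natDegree ∧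
      ∀ x, p.IsRoot x ↔ x ∈ Z := by
  classical
  have hfin : Z.Finite := (finite_setOfPred_isRoot hP).subset hZ
  have hp : ∏ x ∈ hfin.toFinset, (X - C x) ≠ 0 :=
    (monic_prod_of_monic _ _ fun x _ => monic_X_sub_C x).ne_zero
  have hroots := roots_prod_X_sub_C hfin.toFinset
  refine ⟨_, hp, ?_, ?_, fun x => ?_⟩
  · rw [natDegree_finsetProd_X_sub_C_eq_card, ← encard_coe_eq_coe_finsetCard, hfin.coe_toFinset]
  · rw [natDegree_finsetProd_X_sub_C_eq_card]
    refine le_trans (Multiset.card_le_card ?_) (card_roots' P)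
    refine (Multiset.le_iff_subset hfin.toFinset.nodup).2 fun x hx => ?_
    exact (mem_roots hP).2 (hZ (hfin.mem_toFinset.1 hx))
  · rw [← mem_roots hp, hroots, Finset.mem_val, hfin.mem_toFinset]

namespace FiberCount

variable {m : ℕ} (a₀ u : EuclideanSpace ℝ (Fin (m + 1)))

def qPoly : ℝ[X] := X ^ 2 + C (2 * a₀ 0) * X + C (1 + ‖a₀‖ ^ 2)

def ℓPoly : ℝ[X] := C (u 0) * X + C ⟪u, a₀⟫

def critPoly : ℝ[X] :=
  (C (‖u‖ ^ 2) * derivative (qPoly a₀) ^ 2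
      + (ℓPoly a₀ u * derivative (qPoly a₀) - C (2 * u 0) * qPoly a₀) ^ 2) ^ 2
    - C (16 * u 0 ^ 2) * derivative (qPoly a₀) ^ 2 * qPoly a₀

variable {a₀} in
lemma eval_qPoly (r : ℝ) :
    (qPoly a₀).eval r = 1 + ‖r • EuclideanSpace.single (0 : Fin (m + 1)) (1 : ℝ) + a₀‖ ^ 2 := by
  rw [norm_add_sq_real, norm_smul, real_inner_smul_left, EuclideanSpace.inner_single_left]
  simp only [qPoly, eval_add, eval_mul, eval_pow, eval_C, eval_X, PiLp.norm_single, norm_one,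
    mul_one, Real.norm_eq_abs, sq_abs, Real.ringHom_apply]
  ring

variable {a₀} in
lemma eval_qPoly_pos (r : ℝ) : 0 < (qPoly a₀).eval r := by
  rw [eval_qPoly]; positivity

lemma eval_ℓPoly (r : ℝ) :
    (ℓPoly a₀ u).eval r = ⟪u, r • EuclideanSpace.single (0 : Fin (m + 1)) (1 : ℝ) + a₀⟫ := by
  rw [inner_add_right, real_inner_smul_right, EuclideanSpace.inner_single_right]
  simp only [ℓPoly, eval_add, eval_mul, eval_C, eval_X, Real.ringHom_apply]
  ring

lemma derivative_qPoly : derivative (qPoly a₀) = C 2 * X + C (2 * a₀ 0) := by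
  simp only [qPoly, derivative_add, derivative_X_pow, derivative_C_mul_X, derivative_C]
  simp

lemma natDegree_critPoly_le : (critPoly a₀ u).natDegree ≤ 8 := by
  rw [critPoly, derivative_qPoly, qPoly, ℓPoly]
  compute_degree

lemma eval_critPoly (r : ℝ) :
    (critPoly a₀ u).eval r =
      (‖u‖ ^ 2 * (derivative (qPoly a₀)).eval r ^ 2
          + ((ℓPoly a₀ u).eval r * (derivative (qPoly a₀)).eval r
            - 2 * u 0 * (qPoly a₀).eval r) ^ 2) ^ 2
        - 16 * u 0 ^ 2 * (derivative (qPoly a₀)).eval r ^ 2 * (qPoly a₀).eval r := by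
  simp only [critPoly, eval_sub, eval_add, eval_mul, eval_pow, eval_C]

lemma critPoly_ne_zero (hu : u ≠ 0) : critPoly a₀ u ≠ 0 := by
  intro h
  have hκ : 0 < 1 + ‖a₀‖ ^ 2 - a₀ 0 ^ 2 := by
    have : a₀ 0 ^ 2 ≤ ‖a₀‖ ^ 2 := sq_le_sq.2 (by simpa using PiLp.norm_apply_le a₀ 0)
    linarith
  have h₁ := congrArg (eval (-a₀ 0)) h
  have h₂ := congrArg (eval (1 - a₀ 0)) h
  rw [eval_zero, eval_critPoly, derivative_qPoly] at h₁ h₂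
  simp only [qPoly, ℓPoly, eval_add, eval_mul, eval_pow, eval_C, eval_X] at h₁ h₂
  have hα : u 0 = 0 := by
    have : (2 * u 0 * (1 + ‖a₀‖ ^ 2 - a₀ 0 ^ 2)) ^ 4 = 0 := by linear_combination h₁
    simpa [hκ.ne'] using this
  rw [hα] at h₂
  have h₃ : (4 * (‖u‖ ^ 2 + ⟪u, a₀⟫ ^ 2)) ^ 2 = 0 := by linear_combination h₂
  have h₄ : ‖u‖ ^ 2 + ⟪u, a₀⟫ ^ 2 = 0 := by simpa using h₃
  exact hu (norm_eq_zero.1 (pow_eq_zero_iff two_ne_zero |>.1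
    ((add_eq_zero_iff_of_nonneg (sq_nonneg _) (sq_nonneg _)).1 h₄).1))

lemma sCurve_eq (r : ℝ) :
    sCurve m a₀ r = (√((qPoly a₀).eval r))⁻¹ •
      (r • EuclideanSpace.single (0 : Fin (m + 1)) (1 : ℝ) + a₀) := by
  rw [sCurve, eval_qPoly]

lemma continuous_sCurve : Continuous (sCurve m a₀) :=
  ((by fun_prop : Continuous fun r => √((qPoly a₀).eval r)).inv₀
    fun r => (Real.sqrt_pos.2 (eval_qPoly_pos r)).ne').smul (by fun_prop) |>.congr
    fun r => (sCurve_eq a₀ r).symm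

lemma continuous_fFiber : Continuous (fFiber m a₀ u) := by
  have := continuous_sCurve a₀
  unfold fFiber
  fun_prop

lemma norm_sCurve_le (r : ℝ) : ‖sCurve m a₀ r‖ ≤ |r| + ‖a₀‖ := by
  have hq : 1 ≤ √((qPoly a₀).eval r) := by
    rw [Real.one_le_sqrt, eval_qPoly]
    exact le_add_of_nonneg_right (sq_nonneg _)
  rw [sCurve_eq, norm_smul, norm_inv, Real.norm_of_nonneg (Real.sqrt_nonneg _)]
  exact (mul_le_of_le_one_left (norm_nonneg _) (inv_le_one_of_one_le₀ hq)).trans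
    ((norm_add_le _ _).trans (by simp [norm_smul]))

lemma one_sub_norm_add_sCurve_sq_pos {r : ℝ} (h : ‖u‖ + |r| + ‖a₀‖ < 1) :
    0 < 1 - ‖u + sCurve m a₀ r‖ ^ 2 := by
  have := (norm_add_le u (sCurve m a₀ r)).trans_lt
    (by linarith [norm_sCurve_le a₀ r] : ‖u‖ + ‖sCurve m a₀ r‖ < 1)
  nlinarith [norm_nonneg (u + sCurve m a₀ r)]

lemma one_sub_norm_sCurve_sq (r : ℝ) :
    1 - ‖sCurve m a₀ r‖ ^ 2 = (√((qPoly a₀).eval r))⁻¹ ^ 2 := by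
  rw [sCurve_eq, norm_smul, mul_pow, norm_inv, Real.norm_of_nonneg (Real.sqrt_nonneg _), inv_pow,
    Real.sq_sqrt (eval_qPoly_pos r).le, eval_qPoly]
  field_simp
  ring

lemma one_sub_norm_add_sCurve_sq (r : ℝ) :
    1 - ‖u + sCurve m a₀ r‖ ^ 2 = (√((qPoly a₀).eval r))⁻¹ ^ 2 - ‖u‖ ^ 2
      - 2 * (ℓPoly a₀ u).eval r * (√((qPoly a₀).eval r))⁻¹ := by
  rw [norm_add_sq_real, sCurve_eq, real_inner_smul_right, ← eval_ℓPoly, ← sCurve_eq,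
    ← one_sub_norm_sCurve_sq]
  ring

lemma fFiber_eq : fFiber m a₀ u = fun r =>
    √((√((qPoly a₀).eval r))⁻¹ ^ 2 - ‖u‖ ^ 2
      - 2 * (ℓPoly a₀ u).eval r * (√((qPoly a₀).eval r))⁻¹) - (√((qPoly a₀).eval r))⁻¹ := by
  ext r
  rw [fFiber, one_sub_norm_add_sCurve_sq, one_sub_norm_sCurve_sq,
    Real.sqrt_sq (inv_nonneg.2 (Real.sqrt_nonneg _))]

lemma critical_eq_radical_free {c α ℓ q' σ τ : ℝ} (hσ : σ ≠ 0)
    (hτ : τ ^ 2 * σ ^ 2 = 1 - c * σ ^ 2 - 2 * ℓ * σ)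
    (h : -q' + (ℓ * q' - 2 * α * σ ^ 2) * σ + q' * τ * σ = 0) :
    (c * q' ^ 2 + (ℓ * q' - 2 * α * σ ^ 2) ^ 2) ^ 2 - 16 * α ^ 2 * q' ^ 2 * σ ^ 2 = 0 := by
  have h' : σ ^ 2 * (c * q' ^ 2 + (ℓ * q' - 2 * α * σ ^ 2) ^ 2 + 4 * α * q' * σ) = 0 := by
    linear_combination (-q' + (ℓ * q' - 2 * α * σ ^ 2) * σ - q' * τ * σ) * h + q' ^ 2 * hτ
  have h'' := (mul_eq_zero.1 h').resolve_left (pow_ne_zero 2 hσ)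
  linear_combination (c * q' ^ 2 + (ℓ * q' - 2 * α * σ ^ 2) ^ 2 - 4 * α * q' * σ) * h''

lemma isRoot_critPoly_of_deriv_fFiber_eq_zero {r : ℝ} (hA : 0 < 1 - ‖u + sCurve m a₀ r‖ ^ 2)
    (h : deriv (fFiber m a₀ u) r = 0) : (critPoly a₀ u).IsRoot r := by
  have hq := eval_qPoly_pos (a₀ := a₀) r
  rw [one_sub_norm_add_sCurve_sq] at hA
  have ht := (((qPoly a₀).hasDerivAt r).sqrt hq.ne').fun_inv (Real.sqrt_pos.2 hq).ne'
  have hℓ : (derivative (ℓPoly a₀ u)).eval r = u 0 := by simp [ℓPoly]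
  have hf := ((((ht.fun_pow 2).sub_const (‖u‖ ^ 2)).fun_sub
    ((((ℓPoly a₀ u).hasDerivAt r).const_mul 2).fun_mul ht)).sqrt hA.ne').fun_sub ht
  rw [← fFiber_eq, hℓ] at hf
  rw [hf.deriv] at h
  set q := (qPoly a₀).eval r
  set q' := (derivative (qPoly a₀)).eval r
  set ℓ := (ℓPoly a₀ u).eval r
  set σ := √q
  have hσ : 0 < σ := Real.sqrt_pos.2 hq
  have hσq : σ ^ 2 = q := Real.sq_sqrt hq.le
  set τ := √(σ⁻¹ ^ 2 - ‖u‖ ^ 2 - 2 * ℓ * σ⁻¹)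
  have hτ : 0 < τ := Real.sqrt_pos.2 hA
  have hτσ : τ ^ 2 * σ ^ 2 = 1 - ‖u‖ ^ 2 * σ ^ 2 - 2 * ℓ * σ := by
    rw [Real.sq_sqrt hA.le]
    field_simp
  -- `f_u'(r)` is the left-hand side divided by `2 τ σ⁴`
  have hcrit : -q' + (ℓ * q' - 2 * u 0 * σ ^ 2) * σ + q' * τ * σ = 0 := by
    norm_num at h
    field_simp at h
    linear_combination h
  rw [IsRoot, eval_critPoly]
  simpa only [hσq] using critical_eq_radical_free hσ.ne' hτσ hcrit

end FiberCount

open FiberCount in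
/-- For `|a₀|, |u|` small, `f_u'(r) = 0` is equivalent to the vanishing of a polynomial
`p_{u,a₀}` of bounded degree, which is identically zero only if `u = 0`; consequently,
for `u ≠ 0` the function `f_u` is `O(1)`-to-one on `|r| ≪ 1`. -/
theorem stmt_14 (m : ℕ) :
    ∃ δ : ℝ, 0 < δ ∧ ∃ D N : ℕ,
      ∀ a₀ u : EuclideanSpace ℝ (Fin (m + 1)), ‖a₀‖ < δ → ‖u‖ < δ →
        ∃ p : Polynomial ℝ,
          p.natDegree ≤ D ∧
          (∀ r : ℝ, |r| < δ → (deriv (fFiber m a₀ u) r = 0 ↔ Polynomial.eval r p = 0)) ∧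
          (p = 0 → u = 0) ∧
          (u ≠ 0 → ∀ y : ℝ, Set.encard {r : ℝ | |r| < δ ∧ fFiber m a₀ u r = y} ≤ N) := by
  refine ⟨1 / 3, by norm_num, 8, 9, fun a₀ u ha hu => ?_⟩
  rcases eq_or_ne u 0 with rfl | hu0
  · have hf : fFiber m a₀ 0 = fun _ => 0 := funext fun r => by simp [fFiber]
    exact ⟨0, by simp, fun r _ => by simp [hf], fun _ => rfl, fun h => (h rfl).elim⟩
  have hs : OrdConnected {r : ℝ | |r| < 1 / 3} := ⟨fun x hx y hy z hz =>
    abs_lt.2 ⟨(abs_lt.1 hx).1.trans_le hz.1, hz.2.trans_lt (abs_lt.1 hy).2⟩⟩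
  have hcrit : {r | |r| < 1 / 3 ∧ deriv (fFiber m a₀ u) r = 0} ⊆ {r | (critPoly a₀ u).IsRoot r} :=
    fun r ⟨hr, h⟩ => isRoot_critPoly_of_deriv_fFiber_eq_zero a₀ u
      (one_sub_norm_add_sCurve_sq_pos a₀ u (by linarith)) h
  obtain ⟨p, hp0, hcard, hdeg, hroot⟩ :=
    exists_ne_zero_isRoot_iff_mem (critPoly_ne_zero a₀ u hu0) hcrit
  have hD : p.natDegree ≤ 8 := hdeg.trans (natDegree_critPoly_le a₀ u)
  refine ⟨p, hD, fun r hr => ⟨fun h => (hroot r).2 ⟨hr, h⟩, fun h => ((hroot r).1 h).2⟩,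
    fun h => (hp0 h).elim, fun _ y => ?_⟩
  calc _ ≤ {r | |r| < 1 / 3 ∧ deriv (fFiber m a₀ u) r = 0}.encard + 1 :=
        encard_setOf_eq_le_encard_setOf_deriv_eq_zero_add_one hs
          (continuous_fFiber a₀ u).continuousOn y
    _ ≤ 9 := by rw [hcard]; exact_mod_cast Nat.add_le_add_right hD 1
end
end

section
/- Let 0 < λ ≤ 1 and let ρ, r₁ ≤ … ≤ r_{d-1} satisfy ρ ≤ rᵢ ≤ 1, rᵢ ≪ 1, ρ ≪ rᵢ, and r₁ ≥ ρ^{1/2} r_{d-1}. Suppose x = (x', √(1-|x'|²) − 1 + δ₁) with |xᵢ| < λ rᵢ for i ≤ d-1 and |δ₁| < λρ, and y = (y', −√(1-|y'|²) + δ₂) with |yᵢ| < ρ/rᵢ for i ≤ d-1 and |δ₂| < ρ. If |x − y| = 1, then |δ₂| ≤ C λ ρ for a constant C depending only on d. -/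
noncomputable section

/-- Append a last coordinate to a vector of `ℝ^{d-1}`, producing a vector of `ℝ^d`. -/
def withLast (n : ℕ) (v : EuclideanSpace ℝ (Fin n)) (a : ℝ) :
    EuclideanSpace ℝ (Fin (n + 1)) :=
  (EuclideanSpace.equiv (Fin (n + 1)) ℝ).symm
    (Fin.snoc (EuclideanSpace.equiv (Fin n) ℝ v) a)

lemma normsq_withLast_sub (n : ℕ) (v w : EuclideanSpace ℝ (Fin n)) (a b : ℝ) :
    ‖withLast n v a - withLast n w b‖ ^ 2 = (∑ i, (v i - w i) ^ 2) + (a - b) ^ 2 := by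
  rw [EuclideanSpace.norm_eq, Real.sq_sqrt (by positivity)]
  have h1 : ∀ i : Fin (n+1), (withLast n v a - withLast n w b) i
      = Fin.snoc (α := fun _ => ℝ) (fun j => v j) a i
        - Fin.snoc (α := fun _ => ℝ) (fun j => w j) b i := fun i => rfl
  simp only [h1, Real.norm_eq_abs, sq_abs]
  rw [Fin.sum_univ_castSucc]
  simp

lemma normsq_eucl (n : ℕ) (v : EuclideanSpace ℝ (Fin n)) : ‖v‖ ^ 2 = ∑ i, v i ^ 2 := by
  rw [EuclideanSpace.norm_eq, Real.sq_sqrt (by positivity)]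
  simp [sq_abs]

/-- Scalar endgame of the compatibility estimate. -/
lemma scalar_endgame (A B P lam ρ δ₁ δ₂ M : ℝ)
    (hM1 : 1 ≤ M)
    (hlam : 0 < lam) (hlam1 : lam ≤ 1) (hρ : 0 < ρ) (hρ8 : ρ ≤ 1/8)
    (hA0 : 0 ≤ A) (hB0 : 0 ≤ B) (hA_small : A ≤ 1/64) (hB_small : B ≤ 1/64)
    (hAB : A * B ≤ M ^ 2 * (lam ^ 2 * ρ)) (hP : |P| ≤ M * (lam * ρ))
    (hδ1 : |δ₁| < lam * ρ) (hδ2 : |δ₂| < ρ)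
    (hsq : (A - 2 * P + B) +
      (Real.sqrt (1 - A) - 1 + δ₁ - (-Real.sqrt (1 - B) + δ₂)) ^ 2 = 1) :
    |δ₂| ≤ (2 * M ^ 2 + 2 * M + 1) * lam * ρ := by
  set a := Real.sqrt (1 - A) with hadef
  set b := Real.sqrt (1 - B) with hbdef
  have ha2 : a ^ 2 = 1 - A := Real.sq_sqrt (by linarith)
  have hb2 : b ^ 2 = 1 - B := Real.sq_sqrt (by linarith)
  have ha_lb : 1 - A ≤ a := by
    rw [hadef]
    nlinarith [Real.sqrt_le_sqrt (show (1-A)^2 ≤ 1-A by nlinarith),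
      Real.sqrt_sq (show (0:ℝ) ≤ 1-A by linarith)]
  have hb_lb : 1 - B ≤ b := by
    rw [hbdef]
    nlinarith [Real.sqrt_le_sqrt (show (1-B)^2 ≤ 1-B by nlinarith),
      Real.sqrt_sq (show (0:ℝ) ≤ 1-B by linarith)]
  have ha_ub : a ≤ 1 := by rw [hadef]; exact Real.sqrt_le_one.mpr (by linarith)
  have hb_ub : b ≤ 1 := by rw [hbdef]; exact Real.sqrt_le_one.mpr (by linarith)
  clear_value a b
  have hX : (a - 1 + δ₁ - (-b + δ₂)) = a + b - 1 + δ₁ - δ₂ := by ring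
  rw [hX] at hsq
  have hlamρ : lam * ρ ≤ ρ := mul_le_of_le_one_left hρ.le hlam1
  have hδ1' : |δ₁| < ρ := lt_of_lt_of_le hδ1 hlamρ
  have habs1 := abs_lt.mp hδ1'
  have habs2 := abs_lt.mp hδ2
  have hst : 1 ≤ (a + b - 1) + (a + b - 1 + δ₁ - δ₂) := by
    linarith [ha_lb, hb_lb, habs1.1, habs2.2]
  have hkey : (δ₂ - δ₁) * ((a + b - 1) + (a + b - 1 + δ₁ - δ₂))
      = 2 * (1 - a) * (1 - b) - 2 * P := by
    linear_combination (-1) * hsq + ha2 + hb2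
  have h1a : 0 ≤ 1 - a := by linarith
  have h1b : 0 ≤ 1 - b := by linarith
  have h1aA : 1 - a ≤ A := by linarith
  have h1bB : 1 - b ≤ B := by linarith
  have hprod : 2 * (1 - a) * (1 - b) ≤ 2 * (A * B) := by
    have := mul_le_mul h1aA h1bB h1b hA0
    linarith
  have hdiff : |δ₂ - δ₁| ≤ 2 * (A * B) + 2 * |P| := by
    have h1 : |δ₂ - δ₁| ≤ |δ₂ - δ₁| * ((a + b - 1) + (a + b - 1 + δ₁ - δ₂)) :=
      le_mul_of_one_le_right (abs_nonneg _) hst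
    have h2 : |δ₂ - δ₁| * ((a + b - 1) + (a + b - 1 + δ₁ - δ₂))
        = |(δ₂ - δ₁) * ((a + b - 1) + (a + b - 1 + δ₁ - δ₂))| := by
      rw [abs_mul, abs_of_nonneg (by linarith : (0:ℝ) ≤ (a + b - 1) + (a + b - 1 + δ₁ - δ₂))]
    have h3 : |(δ₂ - δ₁) * ((a + b - 1) + (a + b - 1 + δ₁ - δ₂))|
        ≤ 2 * (A * B) + 2 * |P| := by
      rw [hkey]
      calc |2 * (1 - a) * (1 - b) - 2 * P| ≤ |2 * (1 - a) * (1 - b)| + |2 * P| :=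
            abs_sub _ _
        _ = 2 * (1 - a) * (1 - b) + 2 * |P| := by
            rw [abs_of_nonneg (by positivity), abs_mul]
            norm_num
        _ ≤ 2 * (A * B) + 2 * |P| := by linarith
    linarith
  have hsq' : lam ^ 2 ≤ lam := by
    rw [pow_two]
    exact mul_le_of_le_one_left hlam.le hlam1
  have hlam2 : lam ^ 2 * ρ ≤ lam * ρ := mul_le_mul_of_nonneg_right hsq' hρ.le
  have h5 : M ^ 2 * (lam ^ 2 * ρ) ≤ M ^ 2 * (lam * ρ) :=
    mul_le_mul_of_nonneg_left hlam2 (sq_nonneg M)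
  calc |δ₂| ≤ |δ₂ - δ₁| + |δ₁| := by
        have := abs_add_le (δ₂ - δ₁) δ₁
        simpa using this
    _ ≤ (2 * (A * B) + 2 * |P|) + lam * ρ := by linarith [hδ1.le]
    _ ≤ 2 * (M ^ 2 * (lam * ρ)) + 2 * (M * (lam * ρ)) + lam * ρ := by linarith [hAB, hP]
    _ = (2 * M ^ 2 + 2 * M + 1) * lam * ρ := by ring

set_option maxHeartbeats 1000000 in
/-- Compatibility estimate: if `x = (x', √(1-|x'|²)-1+δ₁)` with `|xᵢ| < λrᵢ`, `|δ₁| < λρ`,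
and `y = (y', -√(1-|y'|²)+δ₂)` with `|yᵢ| < ρ/rᵢ`, `|δ₂| < ρ`, where the radii satisfy
`ρ ≤ rᵢ`, `rᵢ ≪ 1`, `ρ ≪ rᵢ`, monotonicity, and `r₁ ≥ ρ^{1/2} r_{d-1}`, then `|x-y| = 1`
forces `|δ₂| ≤ C λ ρ`. -/
theorem stmt_15 (m : ℕ) :
    ∃ c₀ C : ℝ, 0 < c₀ ∧ 0 < C ∧
      ∀ (lam ρ : ℝ) (r : Fin (m + 1) → ℝ) (x' y' : EuclideanSpace ℝ (Fin (m + 1)))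
        (δ₁ δ₂ : ℝ),
        0 < lam → lam ≤ 1 → 0 < ρ → Monotone r →
        (∀ i, ρ ≤ r i) → (∀ i, r i ≤ c₀) → (∀ i, ρ ≤ c₀ * r i) →
        Real.sqrt ρ * r (Fin.last m) ≤ r 0 →
        (∀ i, |x' i| < lam * r i) → |δ₁| < lam * ρ →
        (∀ i, |y' i| < ρ / r i) → |δ₂| < ρ →
        ‖withLast (m + 1) x' (Real.sqrt (1 - ‖x'‖ ^ 2) - 1 + δ₁) -
            withLast (m + 1) y' (-Real.sqrt (1 - ‖y'‖ ^ 2) + δ₂)‖ = 1 →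
        |δ₂| ≤ C * lam * ρ := by
  set M : ℝ := (m : ℝ) + 1 with hM
  have hMm : (0:ℝ) ≤ (m:ℝ) := Nat.cast_nonneg m
  have hM1 : (1:ℝ) ≤ M := by rw [hM]; linarith
  have hM0 : (0:ℝ) < M := by linarith
  refine ⟨1/(8*M), 2*M^2 + 2*M + 1, by positivity, by positivity, ?_⟩
  intro lam ρ r x' y' δ₁ δ₂ hlam hlam1 hρ hmono hρr hrc hρcr hr0 hx hδ1 hy hδ2 hnorm
  have hrpos : ∀ i, 0 < r i := fun i => lt_of_lt_of_le hρ (hρr i)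
  set A := ∑ i, x' i ^ 2 with hAdef
  set B := ∑ i, y' i ^ 2 with hBdef
  set P := ∑ i, x' i * y' i with hPdef
  have hA0 : 0 ≤ A := Finset.sum_nonneg fun i _ => sq_nonneg _
  have hB0 : 0 ≤ B := Finset.sum_nonneg fun i _ => sq_nonneg _
  -- coordinate square bounds
  have hxsq : ∀ i, x' i ^ 2 ≤ (lam * r i) ^ 2 := by
    intro i
    rw [← sq_abs]
    exact pow_le_pow_left₀ (abs_nonneg _) (hx i).le 2
  have hysq : ∀ i, y' i ^ 2 ≤ (ρ / r i) ^ 2 := by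
    intro i
    rw [← sq_abs]
    exact pow_le_pow_left₀ (abs_nonneg _) (hy i).le 2
  have hA_le : A ≤ ∑ i, (lam * r i) ^ 2 :=
    Finset.sum_le_sum fun i _ => hxsq i
  have hB_le : B ≤ ∑ i, (ρ / r i) ^ 2 :=
    Finset.sum_le_sum fun i _ => hysq i
  -- smallness: A, B ≤ 1/64
  have h8M : (8:ℝ) ≤ 8 * M := by linarith
  have hc0 : (1:ℝ)/(8*M) ≤ 1/8 :=
    one_div_le_one_div_of_le (by norm_num) h8M
  have hterm_small : ∀ i, (lam * r i) ^ 2 ≤ (1/(8*M))^2 := by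
    intro i
    have h1 : lam * r i ≤ 1/(8*M) := by
      calc lam * r i ≤ 1 * r i := mul_le_mul_of_nonneg_right hlam1 (hrpos i).le
        _ = r i := one_mul _
        _ ≤ 1/(8*M) := hrc i
    exact pow_le_pow_left₀ (mul_nonneg hlam.le (hrpos i).le) h1 2
  have hterm_small' : ∀ i, (ρ / r i) ^ 2 ≤ (1/(8*M))^2 := by
    intro i
    have h1 : ρ / r i ≤ 1/(8*M) := by
      rw [div_le_iff₀ (hrpos i)]
      exact hρcr i
    exact pow_le_pow_left₀ (div_nonneg hρ.le (hrpos i).le) h1 2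
  have hsum_small : ∀ f : Fin (m+1) → ℝ, (∀ i, f i ≤ (1/(8*M))^2) → (∑ i, f i) ≤ 1/64 := by
    intro f hf
    calc (∑ i, f i) ≤ ∑ _i : Fin (m+1), (1/(8*M))^2 :=
          Finset.sum_le_sum fun i _ => hf i
      _ = M * (1/(8*M))^2 := by
          rw [Finset.sum_const, Finset.card_univ, Fintype.card_fin]
          push_cast [hM]
          ring
      _ = 1/(64*M) := by field_simp; ring
      _ ≤ 1/64 := one_div_le_one_div_of_le (by norm_num) (by linarith)
  have hA_small : A ≤ 1/64 := le_trans hA_le (hsum_small _ hterm_small)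
  have hB_small : B ≤ 1/64 := le_trans hB_le (hsum_small _ hterm_small')
  -- product bound  A*B ≤ M^2 * lam^2 * ρ
  have hrkey : ∀ i j : Fin (m+1), ρ * r i ^ 2 ≤ r j ^ 2 := by
    intro i j
    have h1 : r i ≤ r (Fin.last m) := hmono (Fin.le_last i)
    have h2 : r 0 ≤ r j := hmono (Fin.zero_le j)
    have h3 : ρ * r (Fin.last m) ^ 2 ≤ r 0 ^ 2 := by
      have := pow_le_pow_left₀ (mul_nonneg (Real.sqrt_nonneg ρ) (hrpos (Fin.last m)).le) hr0 2
      rw [mul_pow, Real.sq_sqrt hρ.le] at this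
      exact this
    have h1' : r i ^ 2 ≤ r (Fin.last m) ^ 2 := pow_le_pow_left₀ (hrpos i).le h1 2
    have h2' : r 0 ^ 2 ≤ r j ^ 2 := pow_le_pow_left₀ (hrpos 0).le h2 2
    have h4 : ρ * r i ^ 2 ≤ ρ * r (Fin.last m) ^ 2 := mul_le_mul_of_nonneg_left h1' hρ.le
    linarith
  have hterm : ∀ i j : Fin (m+1), (lam * r i) ^ 2 * (ρ / r j) ^ 2 ≤ lam ^ 2 * ρ := by
    intro i j
    have h2 : (0:ℝ) < r j ^ 2 := pow_pos (hrpos j) 2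
    have heq : (lam * r i) ^ 2 * (ρ / r j) ^ 2 = lam ^ 2 * (ρ * ((ρ * r i ^ 2) / r j ^ 2)) := by
      field_simp
    rw [heq]
    have h3 : (ρ * r i ^ 2) / r j ^ 2 ≤ 1 := (div_le_one h2).mpr (hrkey i j)
    have h4 : ρ * ((ρ * r i ^ 2) / r j ^ 2) ≤ ρ * 1 :=
      mul_le_mul_of_nonneg_left h3 hρ.le
    nlinarith [sq_nonneg lam]
  have hAB : A * B ≤ M ^ 2 * (lam ^ 2 * ρ) := by
    calc A * B ≤ (∑ i, (lam * r i) ^ 2) * (∑ j, (ρ / r j) ^ 2) := by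
          apply mul_le_mul hA_le hB_le hB0
          exact Finset.sum_nonneg fun i _ => by positivity
      _ = ∑ i, ∑ j, (lam * r i) ^ 2 * (ρ / r j) ^ 2 := by
          rw [Finset.sum_mul_sum]
      _ ≤ ∑ _i : Fin (m+1), ∑ _j : Fin (m+1), lam ^ 2 * ρ := by
          apply Finset.sum_le_sum
          intro i _
          exact Finset.sum_le_sum fun j _ => hterm i j
      _ = M ^ 2 * (lam ^ 2 * ρ) := by
          simp [Finset.sum_const, Finset.card_univ]
          push_cast [hM]
          ring
  -- inner product bound
  have hP : |P| ≤ M * (lam * ρ) := by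
    calc |P| ≤ ∑ i, |x' i * y' i| := Finset.abs_sum_le_sum_abs _ _
      _ ≤ ∑ _i : Fin (m+1), lam * ρ := by
          apply Finset.sum_le_sum
          intro i _
          rw [abs_mul]
          have hne : r i ≠ 0 := (hrpos i).ne'
          have h1 : |x' i| * |y' i| ≤ (lam * r i) * (ρ / r i) :=
            mul_le_mul (hx i).le (hy i).le (abs_nonneg _)
              (mul_nonneg hlam.le (hrpos i).le)
          have h2 : (lam * r i) * (ρ / r i) = lam * ρ := by
            field_simp
          linarith
      _ = M * (lam * ρ) := by
          rw [Finset.sum_const, Finset.card_univ, Fintype.card_fin]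
          push_cast [hM]
          ring
  -- norms to sums
  have hAx : ‖x'‖ ^ 2 = A := normsq_eucl _ x'
  have hBy : ‖y'‖ ^ 2 = B := normsq_eucl _ y'
  replace hnorm := congrArg (· ^ 2) hnorm
  simp only [one_pow] at hnorm
  rw [normsq_withLast_sub, hAx, hBy] at hnorm
  have hsum : (∑ i, (x' i - y' i) ^ 2) = A - 2 * P + B := by
    have h1 : ∀ i : Fin (m+1), (x' i - y' i) ^ 2
        = x' i ^ 2 - 2 * (x' i * y' i) + y' i ^ 2 := fun i => by ring
    rw [Finset.sum_congr rfl fun i _ => h1 i]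
    rw [Finset.sum_add_distrib, Finset.sum_sub_distrib, ← Finset.mul_sum]
  rw [hsum] at hnorm
  have hρ8 : ρ ≤ 1/8 := le_trans (le_trans (hρr 0) (hrc 0)) hc0
  clear_value A B P
  exact scalar_endgame A B P lam ρ δ₁ δ₂ M hM1 hlam hlam1 hρ hρ8 hA0 hB0
    hA_small hB_small hAB hP hδ1 hδ2 hnorm
end
end

section
/- Let d ≥ 2 and suppose s, t ∈ ℝ^{d-1} with |s|, |t| ≪ 1 satisfy |sᵢ| ≤ C rᵢ for all i and |tᵢ/√(1-|t|²) − sᵢ/√(1-|s|²)| ≤ C ρ/rᵢ for all i, where ρ ≪ r₁ ≤ … ≤ r_{d-1} ≪ 1 and there is an index k with 1 ≤ k < d-1 such that r_k ≤ ρ^{1/2} ≤ r_{k+1}. Write t = (t_I, t_{II}) ∈ ℝ^k × ℝ^{d-1-k} and s = (s_I, s_{II}). Then for each i with k+1 ≤ i ≤ d-1, |tᵢ − sᵢ √(1-|t_I|²)| ≤ C' ρ/rᵢ, where C' depends only on C and d. -/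
/-- Alternative description of `𝓕(s)`: if `|sᵢ| ≤ C rᵢ` and
`|tᵢ/√(1-|t|²) − sᵢ/√(1-|s|²)| ≤ C ρ/rᵢ` for all `i`, where the monotone radii split at an
index `k` with `r_k ≤ ρ^{1/2} ≤ r_{k+1}`, then for `i ≥ k+1` one has
`|tᵢ − sᵢ√(1-|t_I|²)| ≤ C' ρ/rᵢ`, where `t_I` is the vector of the first `k` coordinates. -/
theorem stmt_16 (n k : ℕ) (hk : 1 ≤ k) (hkn : k < n) :
    ∃ c₀ : ℝ, 0 < c₀ ∧
      ∀ C : ℝ, 0 < C → ∃ C' : ℝ, 0 < C' ∧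
        ∀ (ρ : ℝ) (r : Fin n → ℝ) (s t : EuclideanSpace ℝ (Fin n)),
          0 < ρ → Monotone r → (∀ i, 0 < r i) → (∀ i, r i ≤ c₀) → (∀ i, ρ ≤ c₀ * r i) →
          ‖s‖ ≤ c₀ → ‖t‖ ≤ c₀ →
          r ⟨k - 1, by omega⟩ ≤ Real.sqrt ρ → Real.sqrt ρ ≤ r ⟨k, by omega⟩ →
          (∀ i, |s i| ≤ C * r i) →
          (∀ i, |t i / Real.sqrt (1 - ‖t‖ ^ 2) - s i / Real.sqrt (1 - ‖s‖ ^ 2)| ≤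
            C * ρ / r i) →
          ∀ i : Fin n, k ≤ (i : ℕ) →
            |t i - s i * Real.sqrt (1 - ∑ j ∈ Finset.univ.filter (fun j : Fin n => (j : ℕ) < k),
              (t j) ^ 2)| ≤ C' * ρ / r i := by
  refine ⟨1/2, by norm_num, fun C hC => ⟨C + 16*(n+1)*C^3 + 1, ?_, ?_⟩⟩
  · have h1 : (0:ℝ) ≤ 16*((n:ℝ)+1)*C^3 :=
      mul_nonneg (mul_nonneg (by norm_num) (by positivity)) (pow_nonneg hC.le 3)
    push_cast
    nlinarith
  intro ρ r s t hρ hmono hrpos hrle hρr hsn htn hrk1 hrk hsC heC i hik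
  have hρ0 : (0:ℝ) ≤ ρ := hρ.le
  have hs0 : (0:ℝ) ≤ ‖s‖ := norm_nonneg _
  have ht0 : (0:ℝ) ≤ ‖t‖ := norm_nonneg _
  have hmono' : ∀ p q : Fin n, (p:ℕ) ≤ (q:ℕ) → r p ≤ r q := fun p q h => hmono h
  have hk1n : k - 1 < n := by omega
  set jk1 : Fin n := ⟨k-1, hk1n⟩ with hjk1
  set jk : Fin n := ⟨k, hkn⟩ with hjk
  have hrk1' : r jk1 ≤ Real.sqrt ρ := hrk1
  have hrk' : Real.sqrt ρ ≤ r jk := hrk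
  have ht2 : ‖t‖^2 = ∑ j, (t j)^2 := by
    rw [EuclideanSpace.norm_eq, Real.sq_sqrt (by positivity)]
    simp [Real.norm_eq_abs, sq_abs]
  have hs2 : ‖s‖^2 = ∑ j, (s j)^2 := by
    rw [EuclideanSpace.norm_eq, Real.sq_sqrt (by positivity)]
    simp [Real.norm_eq_abs, sq_abs]
  set I₁ := Finset.univ.filter (fun j : Fin n => (j:ℕ) < k) with hI₁
  set I₂ := Finset.univ.filter (fun j : Fin n => ¬ (j:ℕ) < k) with hI₂
  set a := ∑ j ∈ I₁, (t j)^2 with ha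
  set b := ∑ j ∈ I₂, (t j)^2 with hb
  set u := ∑ j ∈ I₁, (s j)^2 with hu
  set v := ∑ j ∈ I₂, (s j)^2 with hv
  have hab : a + b = ∑ j, (t j)^2 := by
    rw [ha, hb]; exact Finset.sum_filter_add_sum_filter_not _ _ _
  have huv : u + v = ∑ j, (s j)^2 := by
    rw [hu, hv]; exact Finset.sum_filter_add_sum_filter_not _ _ _
  have ha0 : 0 ≤ a := Finset.sum_nonneg fun j _ => sq_nonneg _
  have hb0 : 0 ≤ b := Finset.sum_nonneg fun j _ => sq_nonneg _
  have hu0 : 0 ≤ u := Finset.sum_nonneg fun j _ => sq_nonneg _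
  have hv0 : 0 ≤ v := Finset.sum_nonneg fun j _ => sq_nonneg _
  have htn2 : ‖t‖^2 ≤ 1/4 := by nlinarith only [htn, ht0]
  have hsn2 : ‖s‖^2 ≤ 1/4 := by nlinarith only [hsn, hs0]
  have ha4 : a ≤ 1/4 := by linarith only [hab, hb0, ht2, htn2]
  have hv4 : v ≤ 1/4 := by linarith only [huv, hu0, hs2, hsn2]
  set Q := Real.sqrt (1 - ‖t‖^2) with hQ
  set S := Real.sqrt (1 - ‖s‖^2) with hS
  set P := Real.sqrt (1 - a) with hP
  have hQ0 : 0 ≤ Q := Real.sqrt_nonneg _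
  have hS0 : 0 ≤ S := Real.sqrt_nonneg _
  have hP0 : 0 ≤ P := Real.sqrt_nonneg _
  have hQ2 : Q^2 = 1 - ‖t‖^2 := Real.sq_sqrt (by linarith only [htn2])
  have hS2 : S^2 = 1 - ‖s‖^2 := Real.sq_sqrt (by linarith only [hsn2])
  have hP2 : P^2 = 1 - a := Real.sq_sqrt (by linarith only [ha4])
  have hQhalf : 1/2 ≤ Q := by nlinarith only [hQ2, htn2, hQ0]
  have hShalf : 1/2 ≤ S := by nlinarith only [hS2, hsn2, hS0]
  have hPhalf : 1/2 ≤ P := by nlinarith only [hP2, ha4, hP0]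
  have hQ1 : Q ≤ 1 := by nlinarith only [hQ2, hQ0, sq_nonneg ‖t‖]
  have hS1 : S ≤ 1 := by nlinarith only [hS2, hS0, sq_nonneg ‖s‖]
  have hQpos : 0 < Q := by linarith only [hQhalf]
  have hSpos : 0 < S := by linarith only [hShalf]
  have hQne : Q ≠ 0 := hQpos.ne'
  have hSne : S ≠ 0 := hSpos.ne'
  set e : Fin n → ℝ := fun j => t j / Q - s j / S with hedef
  have heq : ∀ j, e j = t j / Q - s j / S := fun j => rfl
  have heabs : ∀ j, |e j| ≤ C * ρ / r j := by
    intro j; rw [heq j]; exact heC j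
  have htj : ∀ j, t j = Q * (s j / S) + Q * e j := by
    intro j
    rw [heq j]
    field_simp
    ring
  have hterm : ∀ j, (t j)^2 = Q^2/S^2 * (s j)^2 + Q^2 * (2 * s j * e j / S + (e j)^2) := by
    intro j
    rw [htj j]
    field_simp
    ring
  set w := ∑ j ∈ I₂, (2 * s j * e j / S + (e j)^2) with hw
  have hbw : b = Q^2/S^2 * v + Q^2 * w := by
    rw [hb, hv, hw]
    rw [Finset.sum_congr rfl fun j _ => hterm j, Finset.sum_add_distrib,
      ← Finset.mul_sum, ← Finset.mul_sum]
  have hQ2' : Q^2 = 1 - a - b := by rw [hQ2, ht2, ← hab]; ring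
  have hS2' : S^2 = 1 - u - v := by rw [hS2, hs2, ← huv]; ring
  have key : (Q^2/S^2 - P^2) * (S^2 + v) = u * P^2 - Q^2 * w := by
    have h1 : Q^2/S^2 * S^2 = Q^2 := div_mul_cancel₀ _ (pow_ne_zero 2 hSne)
    linear_combination h1 - hbw + hQ2' - P^2 * hS2' - hP2
  -- bound on u
  have hrk1sq : (r jk1)^2 ≤ ρ := by
    nlinarith only [Real.sq_sqrt hρ0, (hrpos jk1).le, Real.sqrt_nonneg ρ, hrk1']
  have hcard1 : (I₁.card : ℝ) ≤ n := by
    have := Finset.card_filter_le Finset.univ (fun j : Fin n => (j:ℕ) < k)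
    exact_mod_cast this.trans (by simp)
  have hcard2 : (I₂.card : ℝ) ≤ n := by
    have := Finset.card_filter_le Finset.univ (fun j : Fin n => ¬ (j:ℕ) < k)
    exact_mod_cast this.trans (by simp)
  have hukey : u ≤ (n:ℝ) * (C^2*ρ) := by
    have hstep : u ≤ I₁.card • (C^2*ρ) := by
      refine Finset.sum_le_card_nsmul _ _ _ (fun j hj => ?_)
      have hjk' : (j:ℕ) < k := by
        rw [hI₁, Finset.mem_filter] at hj; exact hj.2
      have hle : r j ≤ r jk1 := hmono' j jk1 (by show (j:ℕ) ≤ k - 1; omega)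
      have h1 := hsC j
      have h2 : (s j)^2 ≤ (C * r j)^2 := by
        rw [← sq_abs]; exact pow_le_pow_left₀ (abs_nonneg _) h1 2
      have h3 : (r j)^2 ≤ ρ :=
        le_trans (pow_le_pow_left₀ (hrpos j).le hle 2) hrk1sq
      nlinarith only [sq_nonneg C, h2, h3]
    rw [nsmul_eq_mul] at hstep
    refine hstep.trans (mul_le_mul_of_nonneg_right hcard1 ?_)
    exact mul_nonneg (sq_nonneg C) hρ0
  -- bound on w
  have hwkey : |w| ≤ (n:ℝ) * (5*C^2*ρ) := by
    have hstep : |w| ≤ I₂.card • (5*C^2*ρ) := by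
      refine (Finset.abs_sum_le_sum_abs _ _).trans
        (Finset.sum_le_card_nsmul _ _ _ (fun j hj => ?_))
      have hjk' : ¬ (j:ℕ) < k := by
        rw [hI₂, Finset.mem_filter] at hj; exact hj.2
      have hle : r jk ≤ r j := hmono' jk j (by show k ≤ (j:ℕ); omega)
      have hrj2 : ρ ≤ (r j)^2 := by
        have h := hrk'.trans hle
        nlinarith only [Real.sq_sqrt hρ0, Real.sqrt_nonneg ρ, h, (hrpos j).le]
      have h1 := hsC j
      have h2 := heabs j
      have hse : |s j| * |e j| ≤ C^2 * ρ := by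
        calc |s j| * |e j| ≤ (C * r j) * (C * ρ / r j) :=
              mul_le_mul h1 h2 (abs_nonneg _) (mul_nonneg hC.le (hrpos j).le)
          _ = C^2 * ρ := by field_simp [(hrpos j).ne']
      have hee : (e j)^2 ≤ C^2 * ρ := by
        have h4 : |e j|^2 ≤ (C*ρ/r j)^2 := pow_le_pow_left₀ (abs_nonneg _) h2 2
        rw [sq_abs] at h4
        have h5 : (C*ρ/r j)^2 ≤ C^2 * ρ := by
          rw [div_pow, div_le_iff₀ (pow_pos (hrpos j) 2)]
          have hx : 0 ≤ C^2*ρ*((r j)^2 - ρ) :=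
            mul_nonneg (mul_nonneg (sq_nonneg C) hρ0) (sub_nonneg.mpr hrj2)
          linarith only [hx]
        exact h4.trans h5
      have habs : |2*s j*e j/S + (e j)^2| ≤ 2* |s j| * |e j|/S + (e j)^2 := by
        refine (abs_add_le _ _).trans ?_
        rw [abs_div, abs_of_pos hSpos, abs_mul, abs_mul, abs_two, abs_pow, sq_abs]
      have hdiv : 2* |s j| * |e j|/S ≤ 4*(|s j| * |e j|) := by
        rw [div_le_iff₀ hSpos]
        nlinarith only [mul_nonneg (abs_nonneg (s j)) (abs_nonneg (e j)), hShalf]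
      calc |2*s j*e j/S + (e j)^2| ≤ 2* |s j| * |e j|/S + (e j)^2 := habs
        _ ≤ 4*(|s j| * |e j|) + (e j)^2 := by linarith only [hdiv]
        _ ≤ 5*C^2*ρ := by linarith only [hse, hee]
    rw [nsmul_eq_mul] at hstep
    refine hstep.trans (mul_le_mul_of_nonneg_right hcard2 ?_)
    exact mul_nonneg (mul_nonneg (by norm_num) (sq_nonneg C)) hρ0
  -- bound on D
  have habs1 : |u*P^2 - Q^2*w| ≤ u + |w| := by
    have h := abs_add_le (u*P^2) (-(Q^2*w))
    rw [abs_neg] at h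
    have h' : |u*P^2 - Q^2*w| ≤ |u*P^2| + |Q^2*w| := by rw [sub_eq_add_neg]; exact h
    have h1 : |u*P^2| = u*P^2 := abs_of_nonneg (mul_nonneg hu0 (sq_nonneg _))
    have h2 : |Q^2*w| = Q^2* |w| := by rw [abs_mul, abs_pow, sq_abs]
    have h3 : u*P^2 ≤ u := by nlinarith only [hP2, ha0, hu0]
    have hQ2le : Q^2 ≤ 1 := by nlinarith only [hQ0, hQ1]
    have h4 : Q^2 * |w| ≤ |w| := by nlinarith only [abs_nonneg w, hQ2le]
    linarith only [h', h1, h2, h3, h4]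
  have hSv : 3/4 ≤ S^2 + v := by linarith only [hS2, hsn2, hv0]
  have hSv0 : (0:ℝ) ≤ S^2 + v := by linarith only [hSv]
  have hDstep : |Q^2/S^2 - P^2| * (S^2 + v) ≤ u + |w| := by
    rw [← abs_of_nonneg hSv0, ← abs_mul, key]; exact habs1
  have h6 : u + |w| ≤ 6*(n:ℝ)*C^2*ρ := by linarith only [hukey, hwkey]
  have hD : |Q^2/S^2 - P^2| ≤ 8*(n:ℝ)*C^2*ρ := by
    have h9 : |Q^2/S^2 - P^2| * (3/4) ≤ |Q^2/S^2 - P^2| * (S^2 + v) :=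
      mul_le_mul_of_nonneg_left hSv (abs_nonneg _)
    linarith only [h9, hDstep, h6]
  -- bound on Q/S - P
  have hfac : (Q/S - P)*(Q/S + P) = Q^2/S^2 - P^2 := by
    field_simp
    ring
  have hQS0 : 0 ≤ Q/S := div_nonneg hQ0 hS0
  have hQSP : |Q/S - P| ≤ 16*(n:ℝ)*C^2*ρ := by
    have hge : 1/2 ≤ Q/S + P := by linarith only [hQS0, hPhalf]
    have h7 : |Q/S - P| * (Q/S + P) ≤ 8*(n:ℝ)*C^2*ρ := by
      rw [← abs_of_nonneg (by linarith only [hQS0, hPhalf] : (0:ℝ) ≤ Q/S + P), ← abs_mul, hfac]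
      exact hD
    have h8 : |Q/S - P| * (1/2) ≤ |Q/S - P| * (Q/S + P) :=
      mul_le_mul_of_nonneg_left hge (abs_nonneg _)
    linarith only [h7, h8]
  -- final
  have hri := hrpos i
  have hri1 : r i ≤ 1/2 := hrle i
  have hdecomp : t i - s i * P = Q * e i + s i * (Q/S - P) := by
    rw [htj i]; ring
  rw [hdecomp, le_div_iff₀ hri]
  have h1 : |Q*e i + s i*(Q/S-P)| ≤ Q* |e i| + |s i| * |Q/S-P| := by
    refine (abs_add_le _ _).trans ?_
    rw [abs_mul, abs_mul, abs_of_nonneg hQ0]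
  have h2 : |e i| * r i ≤ C*ρ := (le_div_iff₀ hri).mp (heabs i)
  have h3 : |s i| ≤ C * r i := hsC i
  have h4 : |s i| * |Q/S - P| ≤ (C * r i) * (16*(n:ℝ)*C^2*ρ) :=
    mul_le_mul h3 hQSP (abs_nonneg _) (mul_nonneg hC.le hri.le)
  have hQei : Q * |e i| ≤ |e i| := by nlinarith only [abs_nonneg (e i), hQ1, hQ0]
  have hX : |Q*e i + s i*(Q/S-P)| ≤ |e i| + (C*r i)*(16*(n:ℝ)*C^2*ρ) := by
    calc |Q*e i + s i*(Q/S-P)| ≤ Q* |e i| + |s i| * |Q/S-P| := h1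
      _ ≤ |e i| + (C*r i)*(16*(n:ℝ)*C^2*ρ) := add_le_add hQei h4
  have hnC3ρ : (0:ℝ) ≤ (n:ℝ)*C^3*ρ :=
    mul_nonneg (mul_nonneg (Nat.cast_nonneg n) (pow_nonneg hC.le 3)) hρ0
  have hC3ρ : (0:ℝ) ≤ C^3*ρ := mul_nonneg (pow_nonneg hC.le 3) hρ0
  calc |Q*e i + s i*(Q/S-P)| * r i
      ≤ (|e i| + (C*r i)*(16*(n:ℝ)*C^2*ρ)) * r i :=
        mul_le_mul_of_nonneg_right hX hri.le
    _ = |e i| *r i + 16*(n:ℝ)*C^3*ρ*(r i * r i) := by ring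
    _ ≤ C*ρ + 16*(n:ℝ)*C^3*ρ*(1/4) := by
        refine add_le_add h2 (mul_le_mul_of_nonneg_left
          (by nlinarith only [hri.le, hri1]) ?_)
        linarith only [hnC3ρ]
    _ ≤ (C + 16*(n+1)*C^3 + 1)*ρ := by push_cast; linarith only [hnC3ρ, hC3ρ, hρ0]
end
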